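/- arXiv:2408.05820 — 4 statements merged into one kernel-verified Lean document; each statement's English description precedes it below -/
import Mathlib

section
/- For all positive integers m and n, the integer n divides gcd(m, u_m) if and only if gcd(n, a₂) = 1 and ℓ(n) divides m. -/
open Finset

/-- The Lucas sequence with parameters `a₁`, `a₂`:
`u₀ = 0`, `u₁ = 1`, `uₙ = a₁ uₙ₋₁ + a₂ uₙ₋₂`. -/
def lucasSeq (a₁ a₂ : ℤ) : ℕ → ℤ
  | 0 => 0
  | 1 => 1
  | n + 2 => a₁ * lucasSeq a₁ a₂ (n + 1) + a₂ * lucasSeq a₁ a₂ n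

/-- Non-degeneracy of the Lucas sequence: the discriminant `Δ = a₁² + 4a₂` is nonzero
(so the characteristic polynomial `X² - a₁X - a₂` has two distinct roots) and the ratio
of the two roots is not a root of unity (expressed as `α^k ≠ β^k` for all `k ≥ 1`). -/
def LucasNonDeg (a₁ a₂ : ℤ) : Prop :=
  a₁ ^ 2 + 4 * a₂ ≠ 0 ∧
    ∀ α β : ℂ, α ^ 2 = a₁ * α + a₂ → β ^ 2 = a₁ * β + a₂ → α ≠ β →
      ∀ k : ℕ, 0 < k → α ^ k ≠ β ^ k

/-- The rank of appearance `z(m)`: the least positive `n` with `m ∣ uₙ`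
(junk value `0` if no such `n` exists). -/
noncomputable def rankApp (a₁ a₂ : ℤ) (m : ℕ) : ℕ :=
  sInf {n : ℕ | 0 < n ∧ (m : ℤ) ∣ lucasSeq a₁ a₂ n}

/-- `ℓ(m) = lcm(m, z(m))`. -/
noncomputable def ellApp (a₁ a₂ : ℤ) (m : ℕ) : ℕ :=
  Nat.lcm m (rankApp a₁ a₂ m)

/-- `L(x) = x^(log₃ x / log₂ x)`. -/
noncomputable def Lfun (x : ℝ) : ℝ :=
  x ^ (Real.log (Real.log (Real.log x)) / Real.log (Real.log x))

/-- The largest prime factor `P⁺(n)`, with `P⁺(0) = P⁺(1) = 1`. -/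
def Pplus (n : ℕ) : ℕ :=
  max 1 (n.primeFactors.sup id)

/-- `Ψ(X, Y)`: the number of `Y`-smooth positive integers up to `X`. -/
noncomputable def Psi (X Y : ℝ) : ℕ :=
  {n : ℕ | 0 < n ∧ (n : ℝ) ≤ X ∧ (Pplus n : ℝ) ≤ Y}.ncard

/-- `Π*(X, Y)`: the number of primes `p ≤ X` with `p - (Δ/p)` being `Y`-smooth,
where `(Δ/p)` is the Legendre symbol (realized via the Jacobi symbol). -/
noncomputable def PiStar (Δ : ℤ) (X Y : ℝ) : ℕ :=
  {p : ℕ | p.Prime ∧ (p : ℝ) ≤ X ∧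
    (Pplus ((p : ℤ) - jacobiSym Δ p).toNat : ℝ) ≤ Y}.ncard

lemma lucas_add (a₁ a₂ : ℤ) : ∀ m k : ℕ, lucasSeq a₁ a₂ (m + k + 1) =
    lucasSeq a₁ a₂ (m + 1) * lucasSeq a₁ a₂ (k + 1) +
      a₂ * lucasSeq a₁ a₂ m * lucasSeq a₁ a₂ k
  | 0, k => by simp [lucasSeq]
  | 1, k => by
    rw [show 1 + k + 1 = k + 2 from by ring]
    show a₁ * lucasSeq a₁ a₂ (k+1) + a₂ * lucasSeq a₁ a₂ k = _
    simp only [lucasSeq]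
    ring
  | (m+2), k => by
    have h1 : m + 2 + k + 1 = (m + k + 1) + 2 := by ring
    have h2 : m + 1 + k + 1 = (m + k + 1) + 1 := by ring
    have e2 : lucasSeq a₁ a₂ ((m+k+1)+2) =
        a₁ * lucasSeq a₁ a₂ ((m+k+1)+1) + a₂ * lucasSeq a₁ a₂ (m+k+1) := rfl
    have e3 : lucasSeq a₁ a₂ (m+2+1) =
        a₁ * lucasSeq a₁ a₂ (m+2) + a₂ * lucasSeq a₁ a₂ (m+1) := rfl
    have e4 : lucasSeq a₁ a₂ (m+1+1) =
        a₁ * lucasSeq a₁ a₂ (m+1) + a₂ * lucasSeq a₁ a₂ m := rfl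
    rw [h1, e2, ← h2, lucas_add a₁ a₂ (m+1) k, lucas_add a₁ a₂ m k, e3, e4]
    ring

lemma lucas_coprime_a₂ (a₁ a₂ : ℤ) (hcop : IsCoprime a₁ a₂) : ∀ k : ℕ,
    IsCoprime (lucasSeq a₁ a₂ (k + 1)) a₂
  | 0 => by simpa [lucasSeq] using isCoprime_one_left
  | 1 => by simpa [lucasSeq] using hcop
  | (k+2) => by
    show IsCoprime (a₁ * lucasSeq a₁ a₂ (k+1+1) + a₂ * lucasSeq a₁ a₂ (k+1)) a₂
    exact (hcop.mul_left (lucas_coprime_a₂ a₁ a₂ hcop (k+1))).add_mul_left_left _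

lemma lucas_coprime_succ (a₁ a₂ : ℤ) (hcop : IsCoprime a₁ a₂) (k : ℕ) :
    IsCoprime (lucasSeq a₁ a₂ k) (lucasSeq a₁ a₂ (k + 1)) := by
  induction k with
  | zero => simpa [lucasSeq] using isCoprime_one_right
  | succ k ih =>
    have h : lucasSeq a₁ a₂ (k + 1 + 1) =
        a₂ * lucasSeq a₁ a₂ k + lucasSeq a₁ a₂ (k + 1) * a₁ := by
      show a₁ * _ + a₂ * _ = _; ring
    rw [h]
    exact ((lucas_coprime_a₂ a₁ a₂ hcop k).mul_right ih.symm).add_mul_left_right a₁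

lemma lucas_dvd_mul (a₁ a₂ : ℤ) {n : ℤ} {k : ℕ} (h : n ∣ lucasSeq a₁ a₂ k) (j : ℕ) :
    n ∣ lucasSeq a₁ a₂ (j * k) := by
  induction j with
  | zero => simp [lucasSeq]
  | succ j ih =>
    rcases Nat.eq_zero_or_pos k with rfl | hk
    · simp only [Nat.mul_zero] at ih ⊢; exact ih
    · obtain ⟨k', rfl⟩ := Nat.exists_eq_succ_of_ne_zero hk.ne'
      rw [show (j+1) * (k'+1) = j * (k'+1) + k' + 1 by ring, lucas_add]
      exact dvd_add (h.mul_left _) ((ih.mul_left a₂).mul_right _)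

lemma rank_dvd (a₁ a₂ : ℤ) (hcop : IsCoprime a₁ a₂) (n : ℕ) {m : ℕ} (hm : 0 < m)
    (hnu : (n : ℤ) ∣ lucasSeq a₁ a₂ m) : rankApp a₁ a₂ n ∣ m := by
  set S : Set ℕ := {k : ℕ | 0 < k ∧ (n : ℤ) ∣ lucasSeq a₁ a₂ k} with hS
  have hmS : m ∈ S := ⟨hm, hnu⟩
  have hzS : rankApp a₁ a₂ n ∈ S := Nat.sInf_mem ⟨m, hmS⟩
  set z := rankApp a₁ a₂ n with hzdef
  obtain ⟨hz0, hzu⟩ := hzS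
  rw [Nat.dvd_iff_mod_eq_zero]
  by_contra hr0
  obtain ⟨r', hr'⟩ := Nat.exists_eq_succ_of_ne_zero hr0
  have hq : (n : ℤ) ∣ lucasSeq a₁ a₂ (m / z * z) := lucas_dvd_mul a₁ a₂ hzu (m / z)
  have hdm : m / z * z + m % z = m := Nat.div_add_mod' m z
  have hmsplit : m = m / z * z + r' + 1 := by
    conv_lhs => rw [← hdm]
    rw [hr', Nat.succ_eq_add_one, Nat.add_assoc]
  have hid := lucas_add a₁ a₂ (m / z * z) r'
  rw [← hmsplit] at hid
  have h1 : (n : ℤ) ∣ lucasSeq a₁ a₂ (m / z * z + 1) * lucasSeq a₁ a₂ (r' + 1) := by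
    have := dvd_sub (hid ▸ hnu) ((hq.mul_left a₂).mul_right (lucasSeq a₁ a₂ r'))
    simpa using this
  have hcp : IsCoprime ((n : ℤ)) (lucasSeq a₁ a₂ (m / z * z + 1)) :=
    (lucas_coprime_succ a₁ a₂ hcop (m / z * z)).of_isCoprime_of_dvd_left hq
  have hru : (n : ℤ) ∣ lucasSeq a₁ a₂ (r' + 1) := hcp.dvd_of_dvd_mul_left h1
  have hrS : (r' + 1) ∈ S := ⟨Nat.succ_pos _, hru⟩
  have hzle : z ≤ r' + 1 := Nat.sInf_le hrS
  have hlt : r' + 1 < z := by have := Nat.mod_lt m hz0; omega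
  omega


/-- `n ∣ gcd(m, u_m)` iff `gcd(n, a₂) = 1` and `ℓ(n) ∣ m`. -/
theorem dvd_gcd_lucas_iff (a₁ a₂ : ℤ) (ha₁ : a₁ ≠ 0) (ha₂ : a₂ ≠ 0)
    (hcop : IsCoprime a₁ a₂) (hnd : LucasNonDeg a₁ a₂)
    (m n : ℕ) (hm : 0 < m) (hn : 0 < n) :
    n ∣ Int.gcd (m : ℤ) (lucasSeq a₁ a₂ m) ↔
      Int.gcd (n : ℤ) a₂ = 1 ∧ ellApp a₁ a₂ n ∣ m := by
  constructor
  · intro h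
    have hdvd : (n : ℤ) ∣ (Int.gcd (m : ℤ) (lucasSeq a₁ a₂ m) : ℤ) :=
      Int.natCast_dvd_natCast.mpr h
    have hnm : (n : ℤ) ∣ (m : ℤ) := hdvd.trans (Int.gcd_dvd_left _ _)
    have hnu : (n : ℤ) ∣ lucasSeq a₁ a₂ m := hdvd.trans (Int.gcd_dvd_right _ _)
    have hnmn : n ∣ m := Int.natCast_dvd_natCast.mp hnm
    have hcopn : IsCoprime (n : ℤ) a₂ := by
      obtain ⟨m', rfl⟩ := Nat.exists_eq_succ_of_ne_zero hm.ne'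
      exact (lucas_coprime_a₂ a₁ a₂ hcop m').of_isCoprime_of_dvd_left hnu
    refine ⟨Int.isCoprime_iff_gcd_eq_one.mp hcopn, ?_⟩
    exact Nat.lcm_dvd hnmn (rank_dvd a₁ a₂ hcop n hm hnu)
  · rintro ⟨hg, hl⟩
    set z := rankApp a₁ a₂ n with hzdef
    have hz0 : z ≠ 0 := by
      intro h0
      rw [ellApp, ← hzdef, h0, Nat.lcm_zero_right] at hl
      exact hm.ne' (Nat.eq_zero_of_zero_dvd hl)
    have hSne : {k : ℕ | 0 < k ∧ (n : ℤ) ∣ lucasSeq a₁ a₂ k}.Nonempty := by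
      by_contra hc
      rw [Set.not_nonempty_iff_eq_empty] at hc
      rw [hzdef, rankApp, hc, Nat.sInf_empty] at hz0
      exact hz0 rfl
    obtain ⟨-, hzu'⟩ := Nat.sInf_mem hSne
    have hzu : (n : ℤ) ∣ lucasSeq a₁ a₂ z := hzu'
    have hnm : n ∣ m := (Nat.dvd_lcm_left n z).trans hl
    have hzm : z ∣ m := (Nat.dvd_lcm_right n z).trans hl
    have hnu : (n : ℤ) ∣ lucasSeq a₁ a₂ m := by
      have := lucas_dvd_mul a₁ a₂ hzu (m / z)
      rwa [Nat.div_mul_cancel hzm] at this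
    exact Int.natCast_dvd_natCast.mp
      (Int.dvd_coe_gcd (Int.natCast_dvd_natCast.mpr hnm) hnu)
end

section
/- Assume a₂ = ±1. Let y ≥ 3 be a real number and set M_y = ∏_p p^{⌊log y/log p⌋}, the product over all primes p ≤ y (equivalently, M_y = lcm(1, 2, …, ⌊y⌋)). Let s be an odd squarefree positive integer with gcd(s, M_y) = 1 such that for every prime p ∣ s, the integer p − (Δ/p) divides M_y, where (Δ/p) is the Legendre symbol of Δ modulo p. Then n := 2·s·M_y satisfies n ∣ u_n. -/
open Finset

/-- `M_y = ∏_{p ≤ y} p^⌊log y / log p⌋` (the product over primes `p ≤ y`). -/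
noncomputable def Mfun (y : ℝ) : ℕ :=
  ∏ p ∈ (Finset.range (⌊y⌋₊ + 1)).filter Nat.Prime, p ^ ⌊Real.log y / Real.log p⌋₊

/-- companion sequence -/
def lucasV (a₁ a₂ : ℤ) : ℕ → ℤ
  | 0 => 2
  | 1 => a₁
  | n + 2 => a₁ * lucasV a₁ a₂ (n + 1) + a₂ * lucasV a₁ a₂ n

namespace LucasAux

variable (a₁ a₂ : ℤ)

def W (n : ℕ) : ℤ√(a₁ ^ 2 + 4 * a₂) := ⟨lucasV a₁ a₂ n, lucasSeq a₁ a₂ n⟩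

@[simp] lemma U_zero : lucasSeq a₁ a₂ 0 = 0 := rfl
@[simp] lemma U_one : lucasSeq a₁ a₂ 1 = 1 := rfl
lemma U_rec (n : ℕ) : lucasSeq a₁ a₂ (n + 2) = a₁ * lucasSeq a₁ a₂ (n + 1) + a₂ * lucasSeq a₁ a₂ n := rfl
@[simp] lemma V_zero : lucasV a₁ a₂ 0 = 2 := rfl
@[simp] lemma V_one : lucasV a₁ a₂ 1 = a₁ := rfl
lemma V_rec (n : ℕ) : lucasV a₁ a₂ (n + 2) = a₁ * lucasV a₁ a₂ (n + 1) + a₂ * lucasV a₁ a₂ n := rfl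

@[simp] lemma W_re (n : ℕ) : (W a₁ a₂ n).re = lucasV a₁ a₂ n := rfl
@[simp] lemma W_im (n : ℕ) : (W a₁ a₂ n).im = lucasSeq a₁ a₂ n := rfl

lemma W_zero : W a₁ a₂ 0 = 2 := by
  ext <;> simp [W]

lemma W_rec (n : ℕ) : W a₁ a₂ (n + 2) =
    (a₁ : ℤ√(a₁ ^ 2 + 4 * a₂)) * W a₁ a₂ (n + 1) + (a₂ : ℤ√(a₁ ^ 2 + 4 * a₂)) * W a₁ a₂ n := by
  ext <;> simp [W, U_rec, V_rec, Zsqrtd.re_mul, Zsqrtd.im_mul]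

lemma W_mul_one : ∀ m, W a₁ a₂ m * W a₁ a₂ 1 = 2 * W a₁ a₂ (m + 1) := by
  intro m
  induction m using Nat.twoStepInduction with
  | zero => ext <;> simp [W, Zsqrtd.re_mul, Zsqrtd.im_mul]
  | one => ext <;> simp [W, U_rec, V_rec, Zsqrtd.re_mul, Zsqrtd.im_mul] <;> ring
  | more m ih1 ih2 =>
    have h3 := W_rec a₁ a₂ (m + 1)
    rw [W_rec, show m + 2 + 1 = m + 1 + 2 from rfl, h3]
    linear_combination (a₁ : ℤ√(a₁ ^ 2 + 4 * a₂)) * ih2 + (a₂ : ℤ√(a₁ ^ 2 + 4 * a₂)) * ih1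

lemma W_mul : ∀ n m, W a₁ a₂ m * W a₁ a₂ n = 2 * W a₁ a₂ (m + n) := by
  intro n
  induction n using Nat.twoStepInduction with
  | zero => intro m; rw [W_zero]; ring_nf
  | one => intro m; exact W_mul_one a₁ a₂ m
  | more n ih1 ih2 =>
    intro m
    have ih2' : W a₁ a₂ m * W a₁ a₂ (n + 1) = 2 * W a₁ a₂ (m + n + 1) := by
      rw [ih2 m, show m + (n + 1) = m + n + 1 by ring]
    rw [W_rec, show m + (n + 2) = m + n + 2 by ring, W_rec]
    linear_combination (a₁ : ℤ√(a₁ ^ 2 + 4 * a₂)) * ih2' + (a₂ : ℤ√(a₁ ^ 2 + 4 * a₂)) * ih1 m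

lemma W_pow : ∀ k m, 2 * (W a₁ a₂ m) ^ k = 2 ^ k * W a₁ a₂ (k * m) := by
  intro k
  induction k with
  | zero => intro m; simp [W_zero]
  | succ k ih =>
    intro m
    have : (2:ℤ√(a₁ ^ 2 + 4 * a₂)) * (W a₁ a₂ m) ^ (k+1)
        = (2 * (W a₁ a₂ m) ^ k) * W a₁ a₂ m := by ring
    rw [this, ih, mul_assoc, W_mul, show k * m + m = (k+1) * m by ring]
    ring


-- shift identities
lemma V_shift (m : ℕ) : 2 * lucasV a₁ a₂ (m + 1) = a₁ * lucasV a₁ a₂ m + (a₁ ^ 2 + 4 * a₂) * lucasSeq a₁ a₂ m := by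
  have h := congrArg Zsqrtd.re (W_mul_one a₁ a₂ m)
  simp [Zsqrtd.re_mul, Zsqrtd.im_mul] at h
  linarith [h]

lemma U_shift (m : ℕ) : 2 * lucasSeq a₁ a₂ (m + 1) = lucasV a₁ a₂ m + a₁ * lucasSeq a₁ a₂ m := by
  have h := congrArg Zsqrtd.im (W_mul_one a₁ a₂ m)
  simp [Zsqrtd.re_mul, Zsqrtd.im_mul] at h
  linarith [h]

lemma U_double (m : ℕ) : lucasSeq a₁ a₂ (2 * m) = lucasSeq a₁ a₂ m * lucasV a₁ a₂ m := by
  have h := congrArg Zsqrtd.im (W_mul a₁ a₂ m m)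
  simp [Zsqrtd.re_mul, Zsqrtd.im_mul] at h
  rw [two_mul]
  linarith [h]

-- parity: 2 ∣ v - Δ u
lemma V_sub_DU_even : ∀ m, 2 ∣ lucasV a₁ a₂ m - (a₁ ^ 2 + 4 * a₂) * lucasSeq a₁ a₂ m := by
  intro m
  induction m using Nat.twoStepInduction with
  | zero => simp
  | one =>
    simp only [V_one, U_one, mul_one]
    obtain ⟨c, hc⟩ := Int.even_mul_succ_self (a₁ - 1)
    exact ⟨-c - 2 * a₂, by linear_combination -hc⟩
  | more m ih1 ih2 =>
    rw [V_rec, U_rec]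
    have : a₁ * lucasV a₁ a₂ (m+1) + a₂ * lucasV a₁ a₂ m
        - (a₁ ^ 2 + 4 * a₂) * (a₁ * lucasSeq a₁ a₂ (m+1) + a₂ * lucasSeq a₁ a₂ m)
        = a₁ * (lucasV a₁ a₂ (m+1) - (a₁ ^ 2 + 4 * a₂) * lucasSeq a₁ a₂ (m+1))
          + a₂ * (lucasV a₁ a₂ m - (a₁ ^ 2 + 4 * a₂) * lucasSeq a₁ a₂ m) := by ring
    rw [this]
    exact dvd_add (Dvd.dvd.mul_left ih2 _) (Dvd.dvd.mul_left ih1 _)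

lemma V_even_of_U_even {m : ℕ} (h : 2 ∣ lucasSeq a₁ a₂ m) : 2 ∣ lucasV a₁ a₂ m := by
  have h2 := V_sub_DU_even a₁ a₂ m
  have : lucasV a₁ a₂ m = (lucasV a₁ a₂ m - (a₁ ^ 2 + 4 * a₂) * lucasSeq a₁ a₂ m)
      + (a₁ ^ 2 + 4 * a₂) * lucasSeq a₁ a₂ m := by ring
  rw [this]
  exact dvd_add h2 (Dvd.dvd.mul_left h _)

-- addition formula
lemma U_add : ∀ m n, lucasSeq a₁ a₂ (m + n + 1)
    = lucasSeq a₁ a₂ (m + 1) * lucasSeq a₁ a₂ (n + 1) + a₂ * lucasSeq a₁ a₂ m * lucasSeq a₁ a₂ n := by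
  intro m
  induction m using Nat.twoStepInduction with
  | zero => intro n; simp
  | one =>
    intro n
    have h2 : lucasSeq a₁ a₂ 2 = a₁ := by
      rw [show (2:ℕ) = 0 + 2 by omega, U_rec]; simp
    rw [show 1 + n + 1 = n + 2 by omega, U_rec, h2]
    simp only [U_one, mul_one]
  | more m ih1 ih2 =>
    intro n
    have i2 := ih2 n
    rw [show m + 1 + n + 1 = m + n + 1 + 1 by omega] at i2
    simp only [show m + 1 + 1 = m + 2 by omega] at i2
    have i1 := ih1 n
    have r1 := U_rec a₁ a₂ (m + n + 1)
    have r2 := U_rec a₁ a₂ (m + 1)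
    have r3 := U_rec a₁ a₂ m
    rw [show m + 2 + n + 1 = m + n + 1 + 2 by omega, show m + 2 + 1 = m + 1 + 2 by omega]
    linear_combination r1 + a₁ * i2 + a₂ * i1 - lucasSeq a₁ a₂ (n + 1) * r2
      - a₂ * lucasSeq a₁ a₂ n * r3

lemma U_dvd_U_mul (m : ℕ) : ∀ k, lucasSeq a₁ a₂ m ∣ lucasSeq a₁ a₂ (k * m) := by
  intro k
  induction k with
  | zero => simp
  | succ k ih =>
    match m, ih with
    | 0, ih => simp
    | m'+1, ih =>
      have e : (k + 1) * (m' + 1) = k * (m' + 1) + m' + 1 := by ring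
      rw [e, U_add]
      exact dvd_add (dvd_mul_left _ _) ((ih.mul_left a₂).mul_right _)

lemma U_dvd_U {m n : ℕ} (h : m ∣ n) : lucasSeq a₁ a₂ m ∣ lucasSeq a₁ a₂ n := by
  obtain ⟨k, rfl⟩ := h
  rw [mul_comm]
  exact U_dvd_U_mul a₁ a₂ m k


-- binomial with second-order remainder
lemma binom_aux {R : Type*} [CommRing R] (a b : R) :
    ∀ n : ℕ, ∃ X : R, (a + b) ^ n = a ^ n + n * a ^ (n - 1) * b + b ^ 2 * X := by
  intro n
  induction n with
  | zero => exact ⟨0, by simp⟩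
  | succ n ih =>
    match n, ih with
    | 0, _ => exact ⟨0, by simp⟩
    | n + 1, ⟨X, hX⟩ =>
      refine ⟨a * X + (n + 1) * a ^ n + b * X, ?_⟩
      have h : (a + b) ^ (n + 2) = (a + b) ^ (n + 1) * (a + b) := by ring
      rw [h, hX]
      simp only [Nat.add_sub_cancel]
      push_cast
      ring

lemma sqrtd_eq (m : ℕ) : W a₁ a₂ m
    = (lucasV a₁ a₂ m : ℤ√(a₁ ^ 2 + 4 * a₂)) + (lucasSeq a₁ a₂ m : ℤ√(a₁ ^ 2 + 4 * a₂)) * Zsqrtd.sqrtd := by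
  ext <;> simp [W, Zsqrtd.re_mul, Zsqrtd.im_mul]

/-- key identity extracted from `2 W_m^q = 2^q W_{qm}` and binomial expansion -/
lemma pow_identity (q m : ℕ) : ∃ X : ℤ,
    2 ^ q * lucasSeq a₁ a₂ (q * m)
      = 2 * ((q : ℤ) * lucasV a₁ a₂ m ^ (q - 1) * lucasSeq a₁ a₂ m
          + lucasSeq a₁ a₂ m ^ 2 * X) := by
  obtain ⟨X, hX⟩ := binom_aux ((lucasV a₁ a₂ m : ℤ√(a₁ ^ 2 + 4 * a₂)))
    ((lucasSeq a₁ a₂ m : ℤ√(a₁ ^ 2 + 4 * a₂)) * Zsqrtd.sqrtd) q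
  have hw := W_pow a₁ a₂ q m
  rw [sqrtd_eq, hX] at hw
  have him := congrArg Zsqrtd.im hw
  refine ⟨(a₁ ^ 2 + 4 * a₂) * X.im, ?_⟩
  have h2 : ((2:ℤ√(a₁ ^ 2 + 4 * a₂)) ^ q) = ((2 ^ q : ℤ) : ℤ√(a₁ ^ 2 + 4 * a₂)) := by
    push_cast; ring
  rw [h2] at him
  have hq2 : ((q:ℤ) : ℤ√(a₁ ^ 2 + 4 * a₂)) = ((q:ℕ) : ℤ√(a₁ ^ 2 + 4 * a₂)) := by push_cast; ring
  simp only [Zsqrtd.im_mul, Zsqrtd.re_mul, Zsqrtd.im_add, Zsqrtd.re_add,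
    Zsqrtd.re_sqrtd, Zsqrtd.im_sqrtd, Zsqrtd.re_intCast, Zsqrtd.im_intCast, W_im, W_re,
    ← Int.cast_pow, Zsqrtd.re_natCast, Zsqrtd.im_natCast] at him
  have hsq : ((lucasSeq a₁ a₂ m : ℤ√(a₁ ^ 2 + 4 * a₂)) * Zsqrtd.sqrtd) ^ 2
      = ((lucasSeq a₁ a₂ m ^ 2 * (a₁ ^ 2 + 4 * a₂) : ℤ) : ℤ√(a₁ ^ 2 + 4 * a₂)) := by
    ext <;> simp [Zsqrtd.re_mul, Zsqrtd.im_mul, sq] <;> ring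
  have h2re : (2 : ℤ√(a₁ ^ 2 + 4 * a₂)).re = 2 := rfl
  have h2im : (2 : ℤ√(a₁ ^ 2 + 4 * a₂)).im = 0 := rfl
  rw [hsq, h2re, h2im] at him
  simp only [Zsqrtd.re_intCast, Zsqrtd.im_intCast] at him
  linarith [him]


lemma lift_step_odd {q : ℕ} (hq : q.Prime) (hodd : Odd q) {k : ℕ} (hk : 1 ≤ k) {m : ℕ}
    (h : (q : ℤ) ^ k ∣ lucasSeq a₁ a₂ m) : (q : ℤ) ^ (k + 1) ∣ lucasSeq a₁ a₂ (q * m) := by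
  obtain ⟨X, hX⟩ := pow_identity a₁ a₂ q m
  have hd : (q : ℤ) ^ (k + 1) ∣ 2 ^ q * lucasSeq a₁ a₂ (q * m) := by
    rw [hX]
    refine Dvd.dvd.mul_left (dvd_add ?_ ?_) 2
    · calc (q : ℤ) ^ (k + 1) = (q : ℤ) * (q : ℤ) ^ k := by ring
        _ ∣ (q : ℤ) * (lucasV a₁ a₂ m ^ (q - 1) * lucasSeq a₁ a₂ m) :=
            mul_dvd_mul_left _ (h.mul_left _)
        _ = (q : ℤ) * lucasV a₁ a₂ m ^ (q - 1) * lucasSeq a₁ a₂ m := by ring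
    · have h2 : (q : ℤ) ^ (k + 1) ∣ lucasSeq a₁ a₂ m ^ 2 := by
        calc (q : ℤ) ^ (k + 1) ∣ (q : ℤ) ^ (2 * k) := pow_dvd_pow _ (by omega)
        _ = ((q : ℤ) ^ k) ^ 2 := by rw [← pow_mul, mul_comm]
        _ ∣ _ := pow_dvd_pow_of_dvd h 2
      exact h2.mul_right _
  have hcop : IsCoprime ((q : ℤ) ^ (k + 1)) (2 ^ q) := by
    refine IsCoprime.pow ?_
    rw [Int.isCoprime_iff_gcd_eq_one]
    have : ¬ (2 ∣ q) := by
      rintro h2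
      exact (Nat.not_even_iff_odd.mpr hodd) (even_iff_two_dvd.mpr h2)
    simpa [Int.gcd] using Nat.Coprime.symm ((Nat.coprime_two_left).mpr hodd)
  exact hcop.dvd_of_dvd_mul_left hd

lemma lift_step_two {k : ℕ} (hk : 1 ≤ k) {m : ℕ}
    (h : (2 : ℤ) ^ k ∣ lucasSeq a₁ a₂ m) : (2 : ℤ) ^ (k + 1) ∣ lucasSeq a₁ a₂ (2 * m) := by
  rw [U_double]
  have h2 : (2:ℤ) ∣ lucasSeq a₁ a₂ m := dvd_trans (dvd_pow_self 2 (by omega)) h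
  have hv : (2:ℤ) ∣ lucasV a₁ a₂ m := V_even_of_U_even a₁ a₂ h2
  rw [pow_succ]
  exact mul_dvd_mul h hv

lemma lift {q : ℕ} (hq : q.Prime) {m : ℕ} (h : (q : ℤ) ∣ lucasSeq a₁ a₂ m) :
    ∀ j, (q : ℤ) ^ (j + 1) ∣ lucasSeq a₁ a₂ (m * q ^ j) := by
  intro j
  induction j with
  | zero => simpa using h
  | succ j ih =>
    have e : m * q ^ (j + 1) = q * (m * q ^ j) := by ring
    rw [e]
    rcases Nat.Prime.eq_two_or_odd' hq with h2 | hodd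
    · subst h2
      exact lift_step_two a₁ a₂ (by omega) ih
    · exact lift_step_odd a₁ a₂ hq hodd (by omega) ih


lemma sqrtd_pow_odd' (c : ℕ) :
    (Zsqrtd.sqrtd : ℤ√(a₁ ^ 2 + 4 * a₂)) ^ (2 * c + 1)
      = (((a₁ ^ 2 + 4 * a₂) ^ c : ℤ) : ℤ√(a₁ ^ 2 + 4 * a₂)) * Zsqrtd.sqrtd := by
  have hω2 : (Zsqrtd.sqrtd : ℤ√(a₁ ^ 2 + 4 * a₂)) ^ 2
      = ((a₁ ^ 2 + 4 * a₂ : ℤ) : ℤ√(a₁ ^ 2 + 4 * a₂)) := by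
    ext <;> simp [sq, Zsqrtd.re_mul, Zsqrtd.im_mul]
  rw [pow_succ Zsqrtd.sqrtd (2 * c), pow_mul Zsqrtd.sqrtd 2 c, hω2, Int.cast_pow]

lemma sqrtd_pow_odd {q : ℕ} (hodd : Odd q) :
    (Zsqrtd.sqrtd : ℤ√(a₁ ^ 2 + 4 * a₂)) ^ q
      = (((a₁ ^ 2 + 4 * a₂) ^ (q / 2) : ℤ) : ℤ√(a₁ ^ 2 + 4 * a₂)) * Zsqrtd.sqrtd := by
  have hc : q = 2 * (q / 2) + 1 := by
    have := Nat.odd_iff.mp hodd; omega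
  conv_lhs => rw [hc]
  exact sqrtd_pow_odd' a₁ a₂ (q / 2)

lemma mod_q {q : ℕ} (hq : q.Prime) (hodd : Odd q) :
    ((lucasSeq a₁ a₂ q : ℤ) : ZMod q) = ((jacobiSym (a₁ ^ 2 + 4 * a₂) q : ℤ) : ZMod q)
      ∧ ((lucasV a₁ a₂ q : ℤ) : ZMod q) = ((a₁ : ℤ) : ZMod q) := by
  haveI := Fact.mk hq
  have hW1 : W a₁ a₂ 1 = ((a₁ : ℤ) : ℤ√(a₁ ^ 2 + 4 * a₂)) + Zsqrtd.sqrtd := by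
    ext <;> simp [W]
  obtain ⟨r, hr⟩ := exists_add_pow_prime_eq hq
    ((a₁ : ℤ) : ℤ√(a₁ ^ 2 + 4 * a₂)) (Zsqrtd.sqrtd)
  have hwq := W_pow a₁ a₂ q 1
  rw [mul_one, hW1, hr, sqrtd_pow_odd a₁ a₂ hodd] at hwq
  have h2q : ((2:ℤ√(a₁ ^ 2 + 4 * a₂)) ^ q) = ((2 ^ q : ℤ) : ℤ√(a₁ ^ 2 + 4 * a₂)) := by
    push_cast; ring
  have haq : ((a₁ : ℤ) : ℤ√(a₁ ^ 2 + 4 * a₂)) ^ q = ((a₁ ^ q : ℤ) : ℤ√(a₁ ^ 2 + 4 * a₂)) := by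
    push_cast; ring
  have hqq : ((q : ℕ) : ℤ√(a₁ ^ 2 + 4 * a₂)) = (((q : ℤ)) : ℤ√(a₁ ^ 2 + 4 * a₂)) := by
    push_cast; ring
  rw [h2q, haq, hqq] at hwq
  have hre := congrArg Zsqrtd.re hwq
  have him := congrArg Zsqrtd.im hwq
  have h2re : (2 : ℤ√(a₁ ^ 2 + 4 * a₂)).re = 2 := rfl
  have h2im : (2 : ℤ√(a₁ ^ 2 + 4 * a₂)).im = 0 := rfl
  simp only [Zsqrtd.re_mul, Zsqrtd.im_mul, Zsqrtd.re_add, Zsqrtd.im_add,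
    Zsqrtd.re_intCast, Zsqrtd.im_intCast, Zsqrtd.re_sqrtd, Zsqrtd.im_sqrtd,
    h2re, h2im, W_re, W_im] at hre him
  -- hre : 2 * (a₁^q + q * r.re * ...) = 2^q * v q ; him similar
  have hreZ := congrArg (fun z : ℤ => (z : ZMod q)) hre
  have himZ := congrArg (fun z : ℤ => (z : ZMod q)) him
  beta_reduce at hreZ himZ
  push_cast at hreZ himZ
  rw [ZMod.natCast_self] at hreZ himZ
  have h2card : (2 : ZMod q) ^ q = 2 := ZMod.pow_card 2
  have hacard : ((a₁ : ℤ) : ZMod q) ^ q = ((a₁ : ℤ) : ZMod q) := ZMod.pow_card _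
  have h2ne : (2 : ZMod q) ≠ 0 := by
    intro h
    have hdvd : (q : ℕ) ∣ 2 := (ZMod.natCast_eq_zero_iff 2 q).mp (by exact_mod_cast h)
    have hq2 := (Nat.prime_dvd_prime_iff_eq hq Nat.prime_two).mp hdvd
    rw [hq2] at hodd
    exact (by decide : ¬ Odd 2) hodd
  have him' : (2 : ZMod q) * ((a₁ ^ 2 + 4 * a₂ : ℤ) : ZMod q) ^ (q / 2)
      = (2 : ZMod q) ^ q * ((lucasSeq a₁ a₂ q : ℤ) : ZMod q) := by
    push_cast
    linear_combination himZ
  have hre' : (2 : ZMod q) * ((a₁ : ℤ) : ZMod q)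
      = (2 : ZMod q) ^ q * ((lucasV a₁ a₂ q : ℤ) : ZMod q) := by
    push_cast
    push_cast at hacard
    linear_combination hreZ - 2 * hacard
  constructor
  · apply mul_left_cancel₀ h2ne
    have hjac : ((jacobiSym (a₁ ^ 2 + 4 * a₂) q : ℤ) : ZMod q)
        = ((a₁ ^ 2 + 4 * a₂ : ℤ) : ZMod q) ^ (q / 2) := by
      rw [← jacobiSym.legendreSym.to_jacobiSym]
      exact legendreSym.eq_pow q _
    rw [hjac]
    calc (2 : ZMod q) * ((lucasSeq a₁ a₂ q : ℤ) : ZMod q)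
        = (2 : ZMod q) ^ q * ((lucasSeq a₁ a₂ q : ℤ) : ZMod q) := by rw [h2card]
      _ = _ := him'.symm
  · apply mul_left_cancel₀ h2ne
    calc (2 : ZMod q) * ((lucasV a₁ a₂ q : ℤ) : ZMod q)
        = (2 : ZMod q) ^ q * ((lucasV a₁ a₂ q : ℤ) : ZMod q) := by rw [h2card]
      _ = _ := hre'.symm


lemma two_ne_zero_zmod {q : ℕ} (hq : q.Prime) (hodd : Odd q) : (2 : ZMod q) ≠ 0 := by
  haveI := Fact.mk hq
  intro h
  have hdvd : (q : ℕ) ∣ 2 := (ZMod.natCast_eq_zero_iff 2 q).mp (by exact_mod_cast h)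
  have hq2 := (Nat.prime_dvd_prime_iff_eq hq Nat.prime_two).mp hdvd
  rw [hq2] at hodd
  exact (by decide : ¬ Odd 2) hodd

lemma app_zero {q : ℕ} (hq : q.Prime) (hodd : Odd q)
    (hjac : jacobiSym (a₁ ^ 2 + 4 * a₂) q = 0) : (q : ℤ) ∣ lucasSeq a₁ a₂ q := by
  haveI := Fact.mk hq
  have hu := (mod_q a₁ a₂ hq hodd).1
  rw [hjac] at hu
  simpa using (ZMod.intCast_zmod_eq_zero_iff_dvd _ q).mp (by simpa using hu)

lemma app_minus {q : ℕ} (hq : q.Prime) (hodd : Odd q)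
    (hjac : jacobiSym (a₁ ^ 2 + 4 * a₂) q = -1) : (q : ℤ) ∣ lucasSeq a₁ a₂ (q + 1) := by
  haveI := Fact.mk hq
  have hu := (mod_q a₁ a₂ hq hodd).1
  have hv := (mod_q a₁ a₂ hq hodd).2
  rw [hjac] at hu
  have hU := U_shift a₁ a₂ q
  have hcast := congrArg (fun z : ℤ => (z : ZMod q)) hU
  simp only [Int.cast_mul, Int.cast_add, Int.cast_ofNat] at hcast
  push_cast at hcast hu
  rw [← ZMod.intCast_zmod_eq_zero_iff_dvd]
  have h0 : (2 : ZMod q) * ((lucasSeq a₁ a₂ (q + 1) : ℤ) : ZMod q) = 0 := by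
    push_cast
    linear_combination hcast + ((a₁ : ℤ) : ZMod q) * hu + hv
  rcases mul_eq_zero.mp h0 with h | h
  · exact absurd h (two_ne_zero_zmod hq hodd)
  · exact_mod_cast h

lemma app_plus {q : ℕ} (hq : q.Prime) (hodd : Odd q) (ha2pm : a₂ = 1 ∨ a₂ = -1)
    (hjac : jacobiSym (a₁ ^ 2 + 4 * a₂) q = 1) : (q : ℤ) ∣ lucasSeq a₁ a₂ (q - 1) := by
  haveI := Fact.mk hq
  have hu := (mod_q a₁ a₂ hq hodd).1
  have hv := (mod_q a₁ a₂ hq hodd).2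
  rw [hjac] at hu
  have hq1 : q - 1 + 1 = q := by
    have := hq.two_le; omega
  have hU := U_shift a₁ a₂ (q - 1)
  have hV := V_shift a₁ a₂ (q - 1)
  rw [hq1] at hU hV
  have e1 := congrArg (fun z : ℤ => (z : ZMod q)) hU
  have e2 := congrArg (fun z : ℤ => (z : ZMod q)) hV
  beta_reduce at e1 e2
  push_cast at e1 e2 hu
  have h0 : ((4 : ZMod q) * ((a₂ : ℤ) : ZMod q))
      * ((lucasSeq a₁ a₂ (q - 1) : ℤ) : ZMod q) = 0 := by
    push_cast
    linear_combination (- e2) + ((a₁ : ℤ) : ZMod q) * e1 + 2 * hv - 2 * ((a₁ : ℤ) : ZMod q) * hu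
  rw [← ZMod.intCast_zmod_eq_zero_iff_dvd]
  have h2ne := two_ne_zero_zmod hq hodd
  have h4ne : (4 : ZMod q) ≠ 0 := by
    rw [show (4 : ZMod q) = 2 * 2 by norm_num]
    exact mul_ne_zero h2ne h2ne
  have ha2ne : ((a₂ : ℤ) : ZMod q) ≠ 0 := by
    rcases ha2pm with h | h <;> rw [h] <;> simp
  rcases mul_eq_zero.mp h0 with h | h
  · rcases mul_eq_zero.mp h with h' | h'
    · exact absurd h' h4ne
    · exact absurd h' ha2ne
  · exact_mod_cast h

end LucasAux

namespace MfunAux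

lemma Mfun_pos (y : ℝ) : 0 < Mfun y := by
  refine Finset.prod_pos ?_
  intro p hp
  exact pow_pos (Nat.Prime.pos (Finset.mem_filter.mp hp).2) _

lemma prime_pow_dvd (y : ℝ) (hy0 : 0 ≤ y) {p a : ℕ} (hp : p.Prime) (ha : 1 ≤ a)
    (hpa : p ^ a ≤ ⌊y⌋₊) : p ^ a ∣ Mfun y := by
  have hple : p ≤ ⌊y⌋₊ := le_trans (Nat.le_self_pow (by omega) p) hpa
  have hmem : p ∈ (Finset.range (⌊y⌋₊ + 1)).filter Nat.Prime := by
    simp [Finset.mem_filter, Finset.mem_range, hp]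
    omega
  have hay : ((p : ℝ)) ^ a ≤ y := by
    calc ((p:ℝ)) ^ a = ((p ^ a : ℕ) : ℝ) := by push_cast; ring
      _ ≤ (⌊y⌋₊ : ℝ) := by exact_mod_cast Nat.cast_le.mpr hpa
      _ ≤ y := Nat.floor_le hy0
  have hlogp : 0 < Real.log p := Real.log_pos (by exact_mod_cast hp.one_lt)
  have hexp : a ≤ ⌊Real.log y / Real.log p⌋₊ := by
    refine Nat.le_floor ?_
    rw [le_div_iff₀ hlogp]
    have hppos : (0:ℝ) < (p:ℝ) ^ a := by
      have := hp.pos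
      positivity
    have := Real.log_le_log hppos hay
    rwa [Real.log_pow] at this
  exact dvd_trans (pow_dvd_pow p hexp) (Finset.dvd_prod_of_mem _ hmem)

lemma dvd_Mfun (y : ℝ) (hy0 : 0 ≤ y) {t : ℕ} (ht : 0 < t) (hty : t ≤ ⌊y⌋₊) : t ∣ Mfun y := by
  rw [← Nat.factorization_le_iff_dvd ht.ne' (Mfun_pos y).ne']
  intro p
  by_cases hp : p.Prime
  · set a := t.factorization p with hadef
    rcases Nat.eq_zero_or_pos a with h0 | h1
    · simp [h0]
    · have hdvd : p ^ a ∣ t := Nat.ordProj_dvd t p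
      have hle : p ^ a ≤ ⌊y⌋₊ := le_trans (Nat.le_of_dvd ht hdvd) hty
      have := prime_pow_dvd y hy0 hp h1 hle
      exact (hp.pow_dvd_iff_le_factorization (Mfun_pos y).ne').mp this
  · simp [Nat.factorization_eq_zero_of_not_prime _ hp]

lemma prime_le_of_dvd_Mfun (y : ℝ) {q : ℕ} (hq : q.Prime) (h : q ∣ Mfun y) : q ≤ ⌊y⌋₊ := by
  obtain ⟨p, hpmem, hpd⟩ := (Nat.Prime.prime hq).exists_mem_finset_dvd h
  have hp := (Finset.mem_filter.mp hpmem).2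
  have hpr : p < ⌊y⌋₊ + 1 := Finset.mem_range.mp (Finset.mem_filter.mp hpmem).1
  have : q ∣ p := (Nat.Prime.prime hq).dvd_of_dvd_pow hpd
  have := (Nat.prime_dvd_prime_iff_eq hq hp).mp this
  omega

end MfunAux

/-- the construction `n = 2 s M_y` gives `n ∣ uₙ`. -/
theorem construction_self_divisor (a₁ a₂ : ℤ) (ha₁ : a₁ ≠ 0) (ha₂ : a₂ ≠ 0)
    (hcop : IsCoprime a₁ a₂) (hnd : LucasNonDeg a₁ a₂) (ha2pm : a₂ = 1 ∨ a₂ = -1)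
    (y : ℝ) (hy : 3 ≤ y) (s : ℕ) (hs : 0 < s) (hodd : Odd s) (hsf : Squarefree s)
    (hcos : Nat.gcd s (Mfun y) = 1)
    (hdiv : ∀ p : ℕ, p.Prime → p ∣ s →
      ((p : ℤ) - jacobiSym (a₁ ^ 2 + 4 * a₂) p) ∣ (Mfun y : ℤ)) :
    ((2 * s * Mfun y : ℕ) : ℤ) ∣ lucasSeq a₁ a₂ (2 * s * Mfun y) := by
  classical
  set M := Mfun y with hMdef
  set n := 2 * s * M with hndef
  have hy0 : (0:ℝ) ≤ y := by linarith
  have hM0 : M ≠ 0 := (MfunAux.Mfun_pos y).ne'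
  have hn0 : n ≠ 0 := by
    rw [hndef]
    exact Nat.mul_ne_zero (Nat.mul_ne_zero two_ne_zero hs.ne') hM0
  have h3f : 3 ≤ ⌊y⌋₊ := Nat.le_floor (by exact_mod_cast hy)
  have hMn : M ∣ n := ⟨2 * s, by rw [hndef]; ring⟩
  have h2Mn : 2 * M ∣ n := ⟨s, by rw [hndef]; ring⟩
  by_cases hU0 : lucasSeq a₁ a₂ n = 0
  · rw [hU0]; exact dvd_zero _
  have key : ∀ q : ℕ, q.Prime → (q:ℤ) ^ (n.factorization q) ∣ lucasSeq a₁ a₂ n := by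
    intro q hq
    have hfq : n.factorization q
        = (2:ℕ).factorization q + s.factorization q + M.factorization q := by
      rw [hndef, Nat.factorization_mul (Nat.mul_ne_zero two_ne_zero hs.ne') hM0,
        Nat.factorization_mul (two_ne_zero) hs.ne']
      simp [Finsupp.add_apply]
    by_cases hq2 : q = 2
    · subst hq2
      have hs2 : s.factorization 2 = 0 := Nat.factorization_eq_zero_of_not_dvd (by
        have := Nat.odd_iff.mp hodd; omega)
      have h22 : (2:ℕ).factorization 2 = 1 := by
        rw [Nat.Prime.factorization Nat.prime_two]
        simp
      set f := M.factorization 2 with hfdef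
      have hexp : n.factorization 2 = f + 1 := by rw [hfq, hs2, h22]; omega
      have h2f : (2:ℕ)^f ∣ M := Nat.ordProj_dvd M 2
      have hu2eq : lucasSeq a₁ a₂ 2 = a₁ := by
        rw [show (2:ℕ) = 0 + 2 by omega, LucasAux.U_rec]; simp
      rcases Int.even_or_odd a₁ with hpar | hpar
      · have hu2 : (2:ℤ) ∣ lucasSeq a₁ a₂ 2 := by
          rw [hu2eq]; exact hpar.two_dvd
        have hlift := LucasAux.lift a₁ a₂ Nat.prime_two hu2 f
        have hidx : 2 * 2^f ∣ n := dvd_trans (mul_dvd_mul_left 2 h2f) h2Mn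
        rw [hexp]
        exact dvd_trans hlift (LucasAux.U_dvd_U a₁ a₂ hidx)
      · have hu3 : (2:ℤ) ∣ lucasSeq a₁ a₂ 3 := by
          have h3 : lucasSeq a₁ a₂ 3 = a₁ * a₁ + a₂ := by
            rw [show (3:ℕ) = 1 + 2 by omega, LucasAux.U_rec,
              show (1:ℕ) + 1 = 2 by omega, hu2eq]
            simp
          have ha2odd : Odd a₂ := by rcases ha2pm with h | h <;> rw [h] <;> decide
          have heven : Even (a₁ * a₁ + a₂) := Odd.add_odd (hpar.mul hpar) ha2odd
          rw [h3]; exact heven.two_dvd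
        have hlift := LucasAux.lift a₁ a₂ Nat.prime_two hu3 f
        have h3M : (3:ℕ) ∣ M := MfunAux.dvd_Mfun y hy0 (by norm_num) h3f
        have hcop3 : Nat.Coprime 3 (2^f) := Nat.Coprime.pow_right f (by norm_num)
        have hidx : 3 * 2^f ∣ n := dvd_trans (hcop3.mul_dvd_of_dvd_of_dvd h3M h2f) hMn
        rw [hexp]
        exact dvd_trans hlift (LucasAux.U_dvd_U a₁ a₂ hidx)
    · have hoddq : Odd q := hq.odd_of_ne_two hq2
      have h2q : (2:ℕ).factorization q = 0 := Nat.factorization_eq_zero_of_not_dvd (by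
        intro h; exact hq2 ((Nat.prime_dvd_prime_iff_eq hq Nat.prime_two).mp h))
      by_cases hqs : q ∣ s
      · have hqM : ¬ q ∣ M := by
          intro h
          have h1 : q ∣ 1 := hcos ▸ Nat.dvd_gcd hqs h
          have := Nat.dvd_one.mp h1
          have := hq.two_le
          omega
        have hsq1 : s.factorization q = 1 :=
          le_antisymm (hsf.natFactorization_le_one q)
            (hq.factorization_pos_of_dvd hs.ne' hqs)
        have hMq : M.factorization q = 0 := Nat.factorization_eq_zero_of_not_dvd hqM
        have hexp : n.factorization q = 1 := by rw [hfq, h2q, hsq1, hMq]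
        rw [hexp, pow_one]
        rcases jacobiSym.trichotomy (a₁^2 + 4*a₂) q with h0 | h1 | hm1
        · exfalso
          have hd := hdiv q hq hqs
          rw [h0, sub_zero] at hd
          exact hqM (Int.natCast_dvd_natCast.mp hd)
        · have hd := hdiv q hq hqs
          rw [h1] at hd
          have hcast : ((q - 1 : ℕ) : ℤ) = (q:ℤ) - 1 := by
            rw [Nat.cast_sub hq.one_le]; norm_num
          rw [← hcast] at hd
          have hMdvd : (q - 1) ∣ M := Int.natCast_dvd_natCast.mp hd
          have happ := LucasAux.app_plus a₁ a₂ hq hoddq ha2pm h1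
          exact dvd_trans happ (LucasAux.U_dvd_U a₁ a₂ (dvd_trans hMdvd hMn))
        · have hd := hdiv q hq hqs
          rw [hm1, sub_neg_eq_add] at hd
          have hcast : ((q + 1 : ℕ) : ℤ) = (q:ℤ) + 1 := by push_cast; ring
          rw [← hcast] at hd
          have hMdvd : (q + 1) ∣ M := Int.natCast_dvd_natCast.mp hd
          have happ := LucasAux.app_minus a₁ a₂ hq hoddq hm1
          exact dvd_trans happ (LucasAux.U_dvd_U a₁ a₂ (dvd_trans hMdvd hMn))
      · rcases Nat.eq_zero_or_pos (n.factorization q) with h0 | hpos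
        · rw [h0, pow_zero]; exact one_dvd _
        have hqn : q ∣ n := Nat.dvd_of_factorization_pos hpos.ne'
        have hqM : q ∣ M := by
          rw [hndef] at hqn
          rcases (Nat.Prime.dvd_mul hq).mp hqn with h | h
          · rcases (Nat.Prime.dvd_mul hq).mp h with h' | h'
            · exact absurd ((Nat.prime_dvd_prime_iff_eq hq Nat.prime_two).mp h') hq2
            · exact absurd h' hqs
          · exact h
        have he : 1 ≤ M.factorization q := hq.factorization_pos_of_dvd hM0 hqM
        obtain ⟨e', he'⟩ : ∃ e', M.factorization q = e' + 1 :=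
          ⟨M.factorization q - 1, by omega⟩
        have hsq : s.factorization q = 0 := Nat.factorization_eq_zero_of_not_dvd hqs
        have hexp : n.factorization q = e' + 1 := by rw [hfq, h2q, hsq, he']; omega
        rw [hexp]
        have hqeM : q^(e' + 1) ∣ M := he' ▸ Nat.ordProj_dvd M q
        have hqe'M : q^e' ∣ M := dvd_trans (pow_dvd_pow q (by omega)) hqeM
        have hqy : q ≤ ⌊y⌋₊ := MfunAux.prime_le_of_dvd_Mfun y hq hqM
        have hq3 : 3 ≤ q := by
          have := hq.two_le; have := Nat.odd_iff.mp hoddq; omega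
        rcases jacobiSym.trichotomy (a₁^2 + 4*a₂) q with h0 | h1 | hm1
        · have happ := LucasAux.app_zero a₁ a₂ hq hoddq h0
          have hlift := LucasAux.lift a₁ a₂ hq happ e'
          have hidx : q * q^e' ∣ n := by
            have heq : q * q^e' = q^(e' + 1) := by rw [pow_succ]; ring
            rw [heq]
            exact dvd_trans hqeM hMn
          exact dvd_trans hlift (LucasAux.U_dvd_U a₁ a₂ hidx)
        · have happ := LucasAux.app_plus a₁ a₂ hq hoddq ha2pm h1
          have hlift := LucasAux.lift a₁ a₂ hq happ e'
          obtain ⟨t, ht⟩ : ∃ t, q - 1 = 2*t :=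
            ⟨(q-1)/2, by have := Nat.odd_iff.mp hoddq; omega⟩
          have htpos : 0 < t := by omega
          have hty : t ≤ ⌊y⌋₊ := by omega
          have htM : t ∣ M := MfunAux.dvd_Mfun y hy0 htpos hty
          have hqt : ¬ q ∣ t := fun h => absurd (Nat.le_of_dvd htpos h) (by omega)
          have hcopt : Nat.Coprime t (q^e') :=
            Nat.Coprime.pow_right _ (((hq.coprime_iff_not_dvd).mpr hqt).symm)
          have hidx : (q - 1) * q^e' ∣ n := by
            rw [ht, mul_assoc]
            exact dvd_trans (mul_dvd_mul_left 2 (hcopt.mul_dvd_of_dvd_of_dvd htM hqe'M)) h2Mn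
          exact dvd_trans hlift (LucasAux.U_dvd_U a₁ a₂ hidx)
        · have happ := LucasAux.app_minus a₁ a₂ hq hoddq hm1
          have hlift := LucasAux.lift a₁ a₂ hq happ e'
          obtain ⟨t, ht⟩ : ∃ t, q + 1 = 2*t :=
            ⟨(q+1)/2, by have := Nat.odd_iff.mp hoddq; omega⟩
          have htpos : 0 < t := by omega
          have hty : t ≤ ⌊y⌋₊ := by omega
          have htM : t ∣ M := MfunAux.dvd_Mfun y hy0 htpos hty
          have hqt : ¬ q ∣ t := fun h => absurd (Nat.le_of_dvd htpos h) (by omega)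
          have hcopt : Nat.Coprime t (q^e') :=
            Nat.Coprime.pow_right _ (((hq.coprime_iff_not_dvd).mpr hqt).symm)
          have hidx : (q + 1) * q^e' ∣ n := by
            rw [ht, mul_assoc]
            exact dvd_trans (mul_dvd_mul_left 2 (hcopt.mul_dvd_of_dvd_of_dvd htM hqe'M)) h2Mn
          exact dvd_trans hlift (LucasAux.U_dvd_U a₁ a₂ hidx)
  have hNa : (lucasSeq a₁ a₂ n).natAbs ≠ 0 := Int.natAbs_ne_zero.mpr hU0
  have hdvdN : n ∣ (lucasSeq a₁ a₂ n).natAbs := by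
    rw [← Nat.factorization_le_iff_dvd hn0 hNa]
    intro q
    by_cases hq : q.Prime
    · have hk := key q hq
      have hnat : q ^ (n.factorization q) ∣ (lucasSeq a₁ a₂ n).natAbs := by
        have habs : ((q:ℤ) ^ (n.factorization q)).natAbs = q ^ (n.factorization q) := by
          simp [Int.natAbs_pow]
        rw [← habs]
        exact Int.natAbs_dvd_natAbs.mpr hk
      exact (hq.pow_dvd_iff_le_factorization hNa).mp hnat
    · simp [Nat.factorization_eq_zero_of_not_prime _ hq]
  exact dvd_trans (Int.natCast_dvd_natCast.mpr hdvdN) (Int.natAbs_dvd.mpr dvd_rfl)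
end

section
/- For all integers a, b ≥ 2 there exists a constant C > 0 such that for all real x ≥ 2, Σ_{1≤n≤x} log gcd(aⁿ − 1, bⁿ − 1) ≥ x·log x − C·x. -/
open Finset

-- Lemma 1: Fermat
theorem fermat_dvd {p a n : ℕ} (hp : p.Prime) (hpa : ¬ p ∣ a) (h : (p-1) ∣ n) :
    p ∣ a ^ n - 1 := by
  haveI : Fact p.Prime := ⟨hp⟩
  have ha : 1 ≤ a := Nat.one_le_iff_ne_zero.mpr (by rintro rfl; exact hpa (dvd_zero p))
  obtain ⟨k, rfl⟩ := h
  have h1 : ((a : ZMod p)) ^ ((p-1)*k) = 1 := by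
    rw [pow_mul, ZMod.pow_card_sub_one_eq_one, one_pow]
    rwa [Ne, ZMod.natCast_eq_zero_iff]
  have h2 : ((a ^ ((p-1)*k) - 1 : ℕ) : ZMod p) = 0 := by
    rw [Nat.cast_sub (Nat.one_le_pow _ _ ha)]
    push_cast
    rw [h1]; ring
  exact (ZMod.natCast_eq_zero_iff _ _).mp h2

-- Lemma 2: log factorial lower bound
theorem log_factorial_lower (N : ℕ) : (N:ℝ) * Real.log N - N ≤ Real.log (Nat.factorial N) := by
  induction N with
  | zero => simp
  | succ N ih =>
    rw [Nat.factorial_succ, Nat.cast_mul, Real.log_mul (by positivity) (by exact_mod_cast (Nat.factorial_pos N).ne')]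
    rcases Nat.eq_zero_or_pos N with rfl | hN
    · simp [Nat.factorial]
    · have hN' : (0:ℝ) < N := by exact_mod_cast hN
      have key : Real.log ((N+1)/N : ℝ) ≤ (N+1)/N - 1 :=
        Real.log_le_sub_one_of_pos (by positivity)
      rw [Real.log_div (by positivity) (by positivity)] at key
      have h2 : (N+1)/(N:ℝ) - 1 = 1/N := by field_simp; ring
      rw [h2] at key
      have h3 : (N:ℝ) * (Real.log (N+1) - Real.log N) ≤ 1 := by
        calc (N:ℝ) * (Real.log (N+1) - Real.log N) ≤ (N:ℝ) * (1/N) := by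
              exact mul_le_mul_of_nonneg_left key hN'.le
          _ = 1 := by field_simp
      push_cast
      nlinarith [ih]

-- Lemma 3: Legendre bound on factorization of factorial
theorem legendre_bound {p : ℕ} (hp : p.Prime) (N : ℕ) :
    ((Nat.factorial N).factorization p : ℝ) ≤ (N : ℝ) / ((p - 1 : ℕ) : ℝ) := by
  haveI : Fact p.Prime := ⟨hp⟩
  have h1 : (Nat.factorial N).factorization p = padicValNat p (Nat.factorial N) :=
    Nat.factorization_def _ hp
  have h2 : padicValNat p (Nat.factorial N) = ∑ i ∈ Ico 1 (Nat.log p N + 1), N / p ^ i :=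
    padicValNat_factorial (Nat.lt_succ_self _)
  have h3 : ∑ i ∈ Ico 1 (Nat.log p N + 1), N / p ^ i ≤ N / (p - 1) :=
    Nat.geom_sum_Ico_le hp.two_le _ _
  calc ((Nat.factorial N).factorization p : ℝ) ≤ ((N / (p-1) : ℕ) : ℝ) := by
        rw [h1, h2]; exact_mod_cast h3
    _ ≤ (N : ℝ) / ((p-1 : ℕ) : ℝ) := Nat.cast_div_le

-- Lemma 4: log factorial upper bound by Mertens-type sum
theorem log_factorial_upper (N : ℕ) :
    Real.log (Nat.factorial N) ≤
      ∑ p ∈ (range (N+1)).filter Nat.Prime, ((N : ℝ) / ((p - 1 : ℕ) : ℝ)) * Real.log p := by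
  have hfac : (Nat.factorial N) = ∏ p ∈ (Nat.factorial N).primeFactors,
      p ^ (Nat.factorial N).factorization p := by
    conv_lhs => rw [← Nat.factorization_prod_pow_eq_self (Nat.factorial_ne_zero N)]
    rfl
  have hlog : Real.log (Nat.factorial N) = ∑ p ∈ (Nat.factorial N).primeFactors,
      ((Nat.factorial N).factorization p : ℝ) * Real.log p := by
    conv_lhs => rw [hfac]
    push_cast
    rw [Real.log_prod]
    · refine Finset.sum_congr rfl fun p hp => ?_
      rw [Real.log_pow]
    · intro p hp
      have := (Nat.prime_of_mem_primeFactors hp).pos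
      positivity
  rw [hlog]
  have hsub : (Nat.factorial N).primeFactors ⊆ (range (N+1)).filter Nat.Prime := by
    intro p hp
    have hpp := Nat.prime_of_mem_primeFactors hp
    have hdvd := Nat.dvd_of_mem_primeFactors hp
    have hle : p ≤ N := (Nat.Prime.dvd_factorial hpp).mp hdvd
    simp [Finset.mem_filter, Finset.mem_range, Nat.lt_succ_iff, hle, hpp]
  refine le_trans (Finset.sum_le_sum fun p hp => ?_)
    (Finset.sum_le_sum_of_subset_of_nonneg hsub fun p hp _ => ?_)
  · have hpp := Nat.prime_of_mem_primeFactors hp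
    have hlp : (0:ℝ) ≤ Real.log p := Real.log_nonneg (by exact_mod_cast hpp.one_lt.le)
    exact mul_le_mul_of_nonneg_right (legendre_bound hpp N) hlp
  · have hpp : p.Prime := (Finset.mem_filter.mp hp).2
    have hlp : (0:ℝ) ≤ Real.log p := Real.log_nonneg (by exact_mod_cast hpp.one_lt.le)
    positivity

-- Lemma 5: Chebyshev bound
theorem chebyshev_bound (N : ℕ) :
    ∑ p ∈ (range (N+1)).filter Nat.Prime, Real.log p ≤ (N:ℝ) * Real.log 4 := by
  have h1 : ∑ p ∈ (range (N+1)).filter Nat.Prime, Real.log p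
      = Real.log (primorial N) := by
    rw [primorial]
    push_cast
    rw [Real.log_prod]
    intro p hp
    have := (Finset.mem_filter.mp hp).2.pos
    positivity
  rw [h1]
  calc Real.log (primorial N) ≤ Real.log ((4:ℕ)^N) := by
        apply Real.log_le_log (by exact_mod_cast (primorial_pos N))
        exact_mod_cast primorial_le_4_pow N
    _ = (N:ℝ) * Real.log 4 := by push_cast; rw [Real.log_pow]

-- Lemma 6: radical bound
theorem radical_bound {m : ℕ} (hm : m ≠ 0) :
    ∑ p ∈ m.primeFactors, Real.log p ≤ Real.log m := by
  have h1 : ∑ p ∈ m.primeFactors, Real.log p = Real.log (∏ p ∈ m.primeFactors, p : ℕ) := by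
    push_cast
    rw [Real.log_prod]
    intro p hp
    have := (Nat.prime_of_mem_primeFactors hp).pos
    positivity
  rw [h1]
  apply Real.log_le_log
  · exact_mod_cast Finset.prod_pos fun p hp => (Nat.prime_of_mem_primeFactors hp).pos
  · exact_mod_cast Nat.le_of_dvd (Nat.pos_of_ne_zero hm) (Nat.prod_primeFactors_dvd m)

-- Lemma: nat div lower bound in ℝ
theorem nat_div_real_lb (m d : ℕ) (hd : 0 < d) : (m:ℝ)/(d:ℝ) - 1 ≤ ((m/d : ℕ) : ℝ) := by
  have h : m < d * (m / d) + d := by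
    conv_lhs => rw [← Nat.div_add_mod m d]
    exact Nat.add_lt_add_left (Nat.mod_lt _ hd) _
  have hd' : (0:ℝ) < d := by exact_mod_cast hd
  have h' : (m:ℝ) < d * ((m/d : ℕ):ℝ) + d := by exact_mod_cast h
  rw [div_sub_one hd'.ne', div_le_iff₀ hd']
  nlinarith

-- Lemma 7: product of Fermat primes divides the gcd
theorem prod_dvd_gcd (a b n N : ℕ) (ha : 2 ≤ a) (hb : 2 ≤ b) :
    (∏ p ∈ ((range (N+1)).filter Nat.Prime).filter
        (fun p => (p-1) ∣ n ∧ ¬ p ∣ a*b), p) ∣ Nat.gcd (a^n - 1) (b^n - 1) := by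
  apply Finset.prod_primes_dvd
  · intro p hp
    simp only [Finset.mem_filter, Finset.mem_range] at hp
    exact hp.1.2.prime
  · intro p hp
    simp only [Finset.mem_filter, Finset.mem_range] at hp
    obtain ⟨⟨_, hpp⟩, hdvd, hnab⟩ := hp
    exact Nat.dvd_gcd (fermat_dvd hpp (fun h => hnab (h.mul_right b)) hdvd)
      (fermat_dvd hpp (fun h => hnab (h.mul_left a)) hdvd)

-- Lemma 8: pointwise lower bound on log gcd
theorem log_gcd_lb (a b n N : ℕ) (ha : 2 ≤ a) (hb : 2 ≤ b) (hn : 1 ≤ n) :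
    ∑ p ∈ ((range (N+1)).filter Nat.Prime).filter
        (fun p => (p-1) ∣ n ∧ ¬ p ∣ a*b), Real.log p
      ≤ Real.log (Nat.gcd (a^n - 1) (b^n - 1)) := by
  set S := ((range (N+1)).filter Nat.Prime).filter (fun p => (p-1) ∣ n ∧ ¬ p ∣ a*b) with hS
  have hprime : ∀ p ∈ S, p.Prime := fun p hp => (Finset.mem_filter.mp
    (Finset.mem_filter.mp hp).1).2
  have h1 : ∑ p ∈ S, Real.log p = Real.log ((∏ p ∈ S, p : ℕ) : ℝ) := by
    push_cast
    rw [Real.log_prod]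
    intro p hp
    have := (hprime p hp).pos
    positivity
  rw [h1]
  apply Real.log_le_log
  · exact_mod_cast Finset.prod_pos fun p hp => (hprime p hp).pos
  · have hgpos : 0 < Nat.gcd (a^n - 1) (b^n - 1) := by
      apply Nat.gcd_pos_of_pos_left
      have : 2^n ≤ a^n := Nat.pow_le_pow_left ha n
      have : 2 ≤ 2^n := by calc 2 = 2^1 := rfl
                                _ ≤ 2^n := Nat.pow_le_pow_right (by norm_num) hn
      omega
    exact_mod_cast Nat.le_of_dvd hgpos (prod_dvd_gcd a b n N ha hb)

-- Key sum lemma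
theorem key_sum (a b N : ℕ) (ha : 2 ≤ a) (hb : 2 ≤ b) :
    (N:ℝ) * Real.log N - (N:ℝ) * (1 + Real.log (a*b) + Real.log 4) ≤
      ∑ n ∈ Icc 1 N, Real.log (Nat.gcd (a^n - 1) (b^n - 1)) := by
  set P := (range (N+1)).filter Nat.Prime with hP
  set P' := P.filter (fun p => ¬ p ∣ a*b) with hP'
  -- Step 1: pointwise lower bound and swap
  have step1 : ∑ p ∈ P', ((N / (p-1) : ℕ) : ℝ) * Real.log p ≤
      ∑ n ∈ Icc 1 N, Real.log (Nat.gcd (a^n - 1) (b^n - 1)) := by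
    have swap : ∑ p ∈ P', ((N / (p-1) : ℕ) : ℝ) * Real.log p =
        ∑ n ∈ Icc 1 N, ∑ p ∈ P.filter (fun p => (p-1) ∣ n ∧ ¬ p ∣ a*b), Real.log p := by
      have e1 : ∀ n, P.filter (fun p => (p-1) ∣ n ∧ ¬ p ∣ a*b)
          = P'.filter (fun p => (p-1) ∣ n) := by
        intro n
        ext p
        simp only [hP', Finset.mem_filter]
        tauto
      simp_rw [e1, Finset.sum_filter]
      rw [Finset.sum_comm]
      refine Finset.sum_congr rfl fun p hp => ?_
      rw [← Finset.sum_filter]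
      rw [Finset.sum_const, show Finset.Icc 1 N = Finset.Ioc 0 N from Finset.Icc_add_one_left_eq_Ioc 0 N,
        Nat.Ioc_filter_dvd_card_eq_div]
      simp [mul_comm]
    rw [swap]
    apply Finset.sum_le_sum
    intro n hn
    exact log_gcd_lb a b n N ha hb (Finset.mem_Icc.mp hn).1
  refine le_trans ?_ step1
  -- Step 2: replace nat division by real division
  have hlogp_nonneg : ∀ p ∈ P, (0:ℝ) ≤ Real.log p := by
    intro p hp
    have hpp := (Finset.mem_filter.mp hp).2
    exact Real.log_nonneg (by exact_mod_cast hpp.one_lt.le)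
  have step2 : ∑ p ∈ P', ((N:ℝ)/((p-1:ℕ):ℝ) - 1) * Real.log p ≤
      ∑ p ∈ P', ((N / (p-1) : ℕ) : ℝ) * Real.log p := by
    apply Finset.sum_le_sum
    intro p hp
    have hpP : p ∈ P := Finset.mem_of_mem_filter p hp
    have hpp := (Finset.mem_filter.mp hpP).2
    exact mul_le_mul_of_nonneg_right (nat_div_real_lb N (p-1) (Nat.sub_pos_of_lt hpp.one_lt)) (hlogp_nonneg p hpP)
  refine le_trans ?_ step2
  -- Step 3: split
  have expand : ∑ p ∈ P', ((N:ℝ)/((p-1:ℕ):ℝ) - 1) * Real.log p =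
      ∑ p ∈ P', ((N:ℝ)/((p-1:ℕ):ℝ)) * Real.log p - ∑ p ∈ P', Real.log p := by
    rw [← Finset.sum_sub_distrib]
    refine Finset.sum_congr rfl fun p hp => ?_
    ring
  rw [expand]
  -- bound the three pieces
  have hPsplit : ∑ p ∈ P', ((N:ℝ)/((p-1:ℕ):ℝ)) * Real.log p =
      ∑ p ∈ P, ((N:ℝ)/((p-1:ℕ):ℝ)) * Real.log p
      - ∑ p ∈ P.filter (fun p => p ∣ a*b), ((N:ℝ)/((p-1:ℕ):ℝ)) * Real.log p := by
    rw [eq_sub_iff_add_eq, hP', Finset.sum_filter_not_add_sum_filter]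
  have h6 : Real.log (Nat.factorial N) ≤ ∑ p ∈ P, ((N:ℝ)/((p-1:ℕ):ℝ)) * Real.log p :=
    log_factorial_upper N
  have h7 : (N:ℝ) * Real.log N - N ≤ Real.log (Nat.factorial N) := log_factorial_lower N
  have h8 : ∑ p ∈ P.filter (fun p => p ∣ a*b), ((N:ℝ)/((p-1:ℕ):ℝ)) * Real.log p
      ≤ (N:ℝ) * Real.log (a*b) := by
    have hab : a * b ≠ 0 := by positivity
    have hsub : P.filter (fun p => p ∣ a*b) ⊆ (a*b).primeFactors := by
      intro p hp
      simp only [Finset.mem_filter] at hp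
      exact Nat.mem_primeFactors.mpr ⟨(Finset.mem_filter.mp hp.1).2, hp.2, hab⟩
    calc ∑ p ∈ P.filter (fun p => p ∣ a*b), ((N:ℝ)/((p-1:ℕ):ℝ)) * Real.log p
        ≤ ∑ p ∈ P.filter (fun p => p ∣ a*b), (N:ℝ) * Real.log p := by
          apply Finset.sum_le_sum
          intro p hp
          have hpP : p ∈ P := Finset.mem_of_mem_filter p hp
          have hpp := (Finset.mem_filter.mp hpP).2
          have h1 : (1:ℝ) ≤ ((p-1:ℕ):ℝ) := by
            have h2 := hpp.two_le
            have : 1 ≤ p - 1 := by omega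
            exact_mod_cast this
          exact mul_le_mul_of_nonneg_right
            (div_le_self (Nat.cast_nonneg N) h1) (hlogp_nonneg p hpP)
      _ = (N:ℝ) * ∑ p ∈ P.filter (fun p => p ∣ a*b), Real.log p := by
          rw [Finset.mul_sum]
      _ ≤ (N:ℝ) * Real.log (a*b) := by
          apply mul_le_mul_of_nonneg_left _ (Nat.cast_nonneg N)
          calc ∑ p ∈ P.filter (fun p => p ∣ a*b), Real.log p
              ≤ ∑ p ∈ (a*b).primeFactors, Real.log p := by
                apply Finset.sum_le_sum_of_subset_of_nonneg hsub
                intro p hp _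
                exact Real.log_nonneg
                  (by exact_mod_cast (Nat.prime_of_mem_primeFactors hp).one_lt.le)
            _ ≤ Real.log ((a:ℝ)*(b:ℝ)) := by
                have := radical_bound hab
                push_cast at this
                exact this
  have h9 : ∑ p ∈ P', Real.log p ≤ (N:ℝ) * Real.log 4 := by
    calc ∑ p ∈ P', Real.log p ≤ ∑ p ∈ P, Real.log p :=
          Finset.sum_le_sum_of_subset_of_nonneg (Finset.filter_subset _ _)
            (fun p hp _ => hlogp_nonneg p hp)
      _ ≤ (N:ℝ) * Real.log 4 := chebyshev_bound N
  rw [hPsplit]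
  linarith

/-- lower bound for the logarithmic GCD sum on the torus. -/
theorem torus_log_gcd_lower (a b : ℕ) (ha : 2 ≤ a) (hb : 2 ≤ b) :
    ∃ C > (0 : ℝ), ∀ x : ℝ, 2 ≤ x →
      x * Real.log x - C * x ≤
        ∑ n ∈ Finset.Icc 1 ⌊x⌋₊, Real.log (Nat.gcd (a ^ n - 1) (b ^ n - 1)) := by
  have hab1 : (1:ℝ) ≤ (a:ℝ) * (b:ℝ) := by
    have ha' : (2:ℝ) ≤ a := by exact_mod_cast ha
    have hb' : (2:ℝ) ≤ b := by exact_mod_cast hb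
    nlinarith
  have hlogab : 0 ≤ Real.log ((a:ℝ) * (b:ℝ)) := Real.log_nonneg hab1
  have hlog4 : 0 ≤ Real.log 4 := Real.log_nonneg (by norm_num)
  refine ⟨3 + Real.log ((a:ℝ) * (b:ℝ)) + Real.log 4, by linarith, fun x hx => ?_⟩
  set N := ⌊x⌋₊ with hNdef
  have hx0 : (0:ℝ) ≤ x := by linarith
  have hNx : (N:ℝ) ≤ x := Nat.floor_le hx0
  have hxN1 : x < (N:ℝ) + 1 := Nat.lt_floor_add_one x
  have hN2 : 2 ≤ N := Nat.le_floor (by exact_mod_cast hx)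
  have hNpos : (0:ℝ) < N := by
    have : (2:ℝ) ≤ N := by exact_mod_cast hN2
    linarith
  have key := key_sum a b N ha hb
  have hlogxle : Real.log x ≤ x - 1 := Real.log_le_sub_one_of_pos (by linarith)
  have hlogx0 : 0 ≤ Real.log x := Real.log_nonneg (by linarith)
  have hlogdiff : Real.log x - Real.log N ≤ x / N - 1 := by
    have h := Real.log_le_sub_one_of_pos (show (0:ℝ) < x / N by positivity)
    rwa [Real.log_div (by linarith) hNpos.ne'] at h
  have h2c : (N:ℝ) * (Real.log x - Real.log N) ≤ x - N := by
    have := mul_le_mul_of_nonneg_left hlogdiff hNpos.le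
    have heq : (N:ℝ) * (x / N - 1) = x - N := by field_simp
    linarith
  have h1 : (x - N) * Real.log x ≤ Real.log x := by
    nlinarith
  have hA : x * Real.log x ≤ (N:ℝ) * Real.log N + 2*x - 1 - N := by
    nlinarith
  have hB : (N:ℝ) * (Real.log ((a:ℝ)*(b:ℝ)) + Real.log 4)
      ≤ x * (Real.log ((a:ℝ)*(b:ℝ)) + Real.log 4) :=
    mul_le_mul_of_nonneg_right hNx (by linarith)
  nlinarith [key]
end

section
/- There exist constants m₀ and c > 0 such that every squarefree integer m > m₀ with gcd(m, a₂) = 1 has a divisor d with gcd(d, a₂) = 1, gcd(d, z(d)) = 1 and d ≥ c·√m. -/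
open Finset

section Aux

open Polynomial

/-- For a "good" prime `q` (odd, not dividing the discriminant nor `a₂`), the rank of
appearance is positive, divides `q - 1` or `q + 1`, and `q ∣ u_k ↔ z(q) ∣ k`. -/
lemma exists_rank_structure (a₁ a₂ : ℤ) {q : ℕ} (hq : q.Prime) (hq2 : q ≠ 2)
    (hΔ : ¬ (q:ℤ) ∣ (a₁^2 + 4*a₂)) (ha2 : ¬ (q:ℤ) ∣ a₂) :
    ∃ z : ℕ, rankApp a₁ a₂ q = z ∧ 0 < z ∧ (z ∣ q - 1 ∨ z ∣ q + 1) ∧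
      ∀ k, (q:ℤ) ∣ lucasSeq a₁ a₂ k ↔ z ∣ k := by
  haveI : Fact q.Prime := ⟨hq⟩
  set F := ZMod q with hF
  set δ : F := ((a₁^2 + 4*a₂ : ℤ) : F) with hδdef
  have hδ : δ ≠ 0 := by
    rw [hδdef, Ne, ZMod.intCast_zmod_eq_zero_iff_dvd]; exact hΔ
  set P : F[X] := X^2 - C δ with hP
  have hPdeg : P.degree = 2 := degree_X_pow_sub_C (by norm_num) δ
  obtain ⟨K, _, _, s, hs⟩ : ∃ (K : Type) (_ : Field K) (_ : Algebra F K) (s : K),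
      eval s (P.map (algebraMap F K)) = 0 :=
    ⟨P.SplittingField, inferInstance, inferInstance,
      (SplittingField.splits P).exists_eval_eq_zero (by rw [degree_map, hPdeg]; norm_num)⟩
  have hs2 : s^2 = algebraMap F K δ := by
    have := hs
    simp [hP, eval₂_sub, eval₂_pow, eval₂_X, eval₂_C, sub_eq_zero] at this
    exact this
  haveI : CharP K q := charP_of_injective_algebraMap (algebraMap F K).injective q
  have h2 : (2 : K) ≠ 0 := by
    have : ¬ (q ∣ 2) := fun h => hq2 ((Nat.prime_dvd_prime_iff_eq hq Nat.prime_two).mp h)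
    simpa [(CharP.cast_eq_zero_iff K q 2)] using
      (by exact_mod_cast (CharP.cast_eq_zero_iff K q 2).not.mpr this : ((2:ℕ):K) ≠ 0)
  -- roots
  set A1 : K := (a₁ : K) with hA1
  set A2 : K := (a₂ : K) with hA2
  set α : K := (A1 + s) / 2 with hα
  set β : K := (A1 - s) / 2 with hβ
  have hAδ : algebraMap F K δ = A1^2 + 4*A2 := by
    rw [hδdef, map_intCast]
    push_cast
    rfl
  have h4 : (4 : K) ≠ 0 := by
    have : (4:K) = 2^2 := by norm_num
    rw [this]; exact pow_ne_zero _ h2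
  have hsum : α + β = A1 := by
    rw [hα, hβ]; field_simp; ring
  have hdiff : α - β = s := by
    rw [hα, hβ]; field_simp; ring
  have hprod : α * β = -A2 := by
    have h44 : α * β * 4 = A1^2 - s^2 := by rw [hα, hβ]; field_simp; ring
    apply mul_right_cancel₀ h4
    rw [h44, hs2, hAδ]; ring
  have hA2ne : A2 ≠ 0 := by
    rw [hA2, Ne, ← map_intCast (algebraMap F K) a₂,
      map_eq_zero_iff _ (algebraMap F K).injective, ZMod.intCast_zmod_eq_zero_iff_dvd]
    exact ha2
  have hsne : s ≠ 0 := by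
    intro h
    apply hδ
    have := hs2
    rw [h] at this
    simpa using ((map_eq_zero_iff _ (algebraMap F K).injective).mp (by simpa using this.symm))
  have hαβne : α ≠ β := by
    intro h
    apply hsne
    rw [← hdiff, h, sub_self]
  have hβne : β ≠ 0 := by
    intro h
    apply hA2ne
    have := hprod
    rw [h, mul_zero] at this
    simpa using this.symm
  have hαne : α ≠ 0 := by
    intro h
    apply hA2ne
    have := hprod
    rw [h, zero_mul] at this
    simpa using this.symm
  -- quadratic relations
  have hαsq : α^2 = A1 * α + A2 := by
    have : α^2 - (α+β)*α + α*β = 0 := by ring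
    rw [hsum, hprod] at this
    linear_combination this
  have hβsq : β^2 = A1 * β + A2 := by
    have : β^2 - (α+β)*β + α*β = 0 := by ring
    rw [hsum, hprod] at this
    linear_combination this
  -- Lucas sequence formula
  have hu : ∀ n, ((lucasSeq a₁ a₂ n : ℤ) : K) * (α - β) = α^n - β^n := by
    have key : ∀ n, ((lucasSeq a₁ a₂ n : ℤ) : K) * (α - β) = α^n - β^n ∧
        ((lucasSeq a₁ a₂ (n+1) : ℤ) : K) * (α - β) = α^(n+1) - β^(n+1) := by
      intro n
      induction n with
      | zero => simp [lucasSeq]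
      | succ n ih =>
        refine ⟨ih.2, ?_⟩
        have hrec : (lucasSeq a₁ a₂ (n+2) : ℤ) = a₁ * lucasSeq a₁ a₂ (n+1) + a₂ * lucasSeq a₁ a₂ n := rfl
        have hcast : ((lucasSeq a₁ a₂ (n+2) : ℤ) : K)
            = A1 * ((lucasSeq a₁ a₂ (n+1) : ℤ) : K) + A2 * ((lucasSeq a₁ a₂ n : ℤ) : K) := by
          rw [hrec]; push_cast; rw [hA1, hA2]
        have e1 : α^(n+2) = A1 * α^(n+1) + A2 * α^n := by
          calc α^(n+2) = α^2 * α^n := by ring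
          _ = (A1 * α + A2) * α^n := by rw [hαsq]
          _ = A1 * α^(n+1) + A2 * α^n := by ring
        have e2 : β^(n+2) = A1 * β^(n+1) + A2 * β^n := by
          calc β^(n+2) = β^2 * β^n := by ring
          _ = (A1 * β + A2) * β^n := by rw [hβsq]
          _ = A1 * β^(n+1) + A2 * β^n := by ring
        rw [hcast, e1, e2, add_mul, mul_assoc, mul_assoc, ih.1, ih.2]
        ring
    exact fun n => (key n).1
  -- divisibility iff ratio power
  set r : K := α / β with hr
  have hrne : r ≠ 0 := div_ne_zero hαne hβne
  have hdvd_iff : ∀ k, ((q:ℤ) ∣ lucasSeq a₁ a₂ k ↔ r^k = 1) := by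
    intro k
    have h1 : (q:ℤ) ∣ lucasSeq a₁ a₂ k ↔ ((lucasSeq a₁ a₂ k : ℤ) : K) = 0 := by
      rw [← map_intCast (algebraMap F K), map_eq_zero_iff _ (algebraMap F K).injective,
        ZMod.intCast_zmod_eq_zero_iff_dvd]
    rw [h1]
    constructor
    · intro h
      have := hu k
      rw [h, zero_mul] at this
      have hαβ : α^k = β^k := sub_eq_zero.mp this.symm
      rw [hr, div_pow, hαβ, div_self (pow_ne_zero _ hβne)]
    · intro h
      rw [hr, div_pow, div_eq_one_iff_eq (pow_ne_zero _ hβne)] at h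
      have := hu k
      rw [h, sub_self] at this
      rcases mul_eq_zero.mp this with h' | h'
      · exact h'
      · exact absurd (sub_eq_zero.mp h') hαβne
  -- Frobenius
  have hfix : ∀ w : F, (algebraMap F K w)^q = algebraMap F K w := by
    intro w; rw [← map_pow, ZMod.pow_card]
  have hA1q : A1^q = A1 := by
    rw [hA1, ← map_intCast (algebraMap F K) a₁]; exact hfix _
  have hA2q : A2^q = A2 := by
    rw [hA2, ← map_intCast (algebraMap F K) a₂]; exact hfix _
  have hroot : (α^q)^2 = A1 * α^q + A2 := by
    calc (α^q)^2 = (α^2)^q := by rw [← pow_mul, ← pow_mul, mul_comm]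
    _ = (A1*α + A2)^q := by rw [hαsq]
    _ = (A1*α)^q + A2^q := add_pow_char _ _ q
    _ = A1^q * α^q + A2^q := by rw [mul_pow]
    _ = A1 * α^q + A2 := by rw [hA1q, hA2q]
  have hβeq : β = A1 - α := by rw [← hsum]; ring
  have hβq : β^q = A1 - α^q := by
    rw [hβeq, sub_pow_char (p := q) A1 α, hA1q]
  have hcases : α^q = α ∨ α^q = β := by
    have hz : (α^q - α)*(α^q - β) = 0 := by
      have expand : (α^q - α)*(α^q - β) = (α^q)^2 - (α+β)*(α^q) + α*β := by ring
      rw [expand, hsum, hprod, hroot]; ring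
    rcases mul_eq_zero.mp hz with h | h
    · exact Or.inl (sub_eq_zero.mp h)
    · exact Or.inr (sub_eq_zero.mp h)
  have hq3 : 3 ≤ q := by
    rcases hq.two_le.lt_or_eq with h | h
    · omega
    · omega
  obtain ⟨e, heor, hepos, hre⟩ : ∃ e : ℕ, (e = q - 1 ∨ e = q + 1) ∧ 0 < e ∧ r^e = 1 := by
    rcases hcases with h | h
    · refine ⟨q - 1, Or.inl rfl, by omega, ?_⟩
      have hβqq : β^q = β := by rw [hβq, h, ← hβeq]
      have hrq : r^q = r := by
        rw [hr, div_pow, h, hβqq]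
      have : r^(q-1) * r = 1 * r := by
        rw [one_mul, ← pow_succ]
        have : q - 1 + 1 = q := by omega
        rw [this, hrq]
      exact mul_right_cancel₀ hrne this
    · refine ⟨q + 1, Or.inr rfl, by omega, ?_⟩
      have hβqq : β^q = α := by rw [hβq, h, ← hsum]; ring
      have h1 : α^(q+1) = β * α := by rw [pow_succ, h]
      have h2' : β^(q+1) = α * β := by rw [pow_succ, hβqq]
      rw [hr, div_pow, h1, h2', mul_comm β α, div_self]
      exact mul_ne_zero hαne hβne
  have hfin : IsOfFinOrder r := isOfFinOrder_iff_pow_eq_one.mpr ⟨e, hepos, hre⟩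
  have hzpos : 0 < orderOf r := hfin.orderOf_pos
  have hzdvd : orderOf r ∣ e := orderOf_dvd_of_pow_eq_one hre
  have hiff : ∀ k, ((q:ℤ) ∣ lucasSeq a₁ a₂ k ↔ orderOf r ∣ k) := by
    intro k
    rw [hdvd_iff k, ← orderOf_dvd_iff_pow_eq_one]
  refine ⟨orderOf r, ?_, hzpos, ?_, hiff⟩
  · unfold rankApp
    apply le_antisymm
    · exact Nat.sInf_le ⟨hzpos, (hiff _).mpr dvd_rfl⟩
    · refine le_csInf ⟨orderOf r, ⟨hzpos, (hiff _).mpr dvd_rfl⟩⟩ ?_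
      intro n hn
      exact Nat.le_of_dvd hn.1 ((hiff n).mp hn.2)
  · rcases heor with h | h
    · exact Or.inl (h ▸ hzdvd)
    · exact Or.inr (h ▸ hzdvd)

end Aux

/-- Greedy selection of a subset avoiding divisibility obstructions, processing elements
from largest to smallest. -/
def pick (z : ℕ → ℕ) (S : Finset ℕ) : Finset ℕ :=
  if h : S.Nonempty then
    insert (S.max' h)
      (pick z ((S.erase (S.max' h)).filter (fun p => ¬ p ∣ z (S.max' h))))
  else ∅
termination_by S.card
decreasing_by
  calc ((S.erase (S.max' h)).filter (fun p => ¬ p ∣ z (S.max' h))).card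
      ≤ (S.erase (S.max' h)).card := Finset.card_filter_le _ _
    _ < S.card := Finset.card_erase_lt_of_mem (S.max'_mem h)

lemma pick_subset (z : ℕ → ℕ) (S : Finset ℕ) : pick z S ⊆ S := by
  induction S using Finset.strongInduction with
  | _ S ih =>
    rw [pick]
    split_ifs with h
    · intro x hx
      rcases Finset.mem_insert.mp hx with rfl | hx
      · exact S.max'_mem h
      · have hsub : (S.erase (S.max' h)).filter (fun p => ¬ p ∣ z (S.max' h)) ⊂ S := by
          refine Finset.ssubset_of_subset_of_ssubset (Finset.filter_subset _ _) ?_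
          exact Finset.erase_ssubset (S.max'_mem h)
        exact (Finset.erase_subset _ _) ((Finset.filter_subset _ _) (ih _ hsub hx))
    · exact Finset.empty_subset _

lemma pick_avoid (z : ℕ → ℕ) (S : Finset ℕ) :
    ∀ p ∈ pick z S, ∀ q ∈ pick z S, p < q → ¬ p ∣ z q := by
  induction S using Finset.strongInduction with
  | _ S ih =>
    rw [pick]
    split_ifs with h
    · set q0 := S.max' h with hq0
      set S' := (S.erase q0).filter (fun p => ¬ p ∣ z q0) with hS'
      have hsub : S' ⊂ S :=
        Finset.ssubset_of_subset_of_ssubset (Finset.filter_subset _ _)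
          (Finset.erase_ssubset (S.max'_mem h))
      intro p hp q hq hlt
      rcases Finset.mem_insert.mp hp with rfl | hp' <;>
        rcases Finset.mem_insert.mp hq with rfl | hq'
      · omega
      · exfalso
        have hqS : q ∈ S.erase q0 := (Finset.filter_subset _ _) (pick_subset z S' hq')
        have : q ≤ q0 := S.le_max' q (Finset.mem_of_mem_erase hqS)
        have : q ≠ q0 := Finset.ne_of_mem_erase hqS
        omega
      · have hpS' : p ∈ S' := pick_subset z S' hp'
        exact (Finset.mem_filter.mp hpS').2
      · exact ih S' hsub p hp' q hq' hlt
    · intro p hp; simp at hp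

lemma pick_prod (z : ℕ → ℕ) (S : Finset ℕ)
    (hb : ∀ q ∈ S, ∀ R : Finset ℕ, R ⊆ S.erase q → (∀ p ∈ R, p ∣ z q) →
      (∏ p ∈ R, p) ≤ q) :
    (∏ p ∈ S, p) ≤ (∏ p ∈ pick z S, p) ^ 2 := by
  induction S using Finset.strongInduction with
  | _ S ih =>
    rw [pick]
    split_ifs with h
    · set q0 := S.max' h with hq0
      set S' := (S.erase q0).filter (fun p => ¬ p ∣ z q0) with hS'
      set R := (S.erase q0).filter (fun p => p ∣ z q0) with hR
      have hsub : S' ⊂ S :=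
        Finset.ssubset_of_subset_of_ssubset (Finset.filter_subset _ _)
          (Finset.erase_ssubset (S.max'_mem h))
      have hRle : (∏ p ∈ R, p) ≤ q0 := by
        refine hb q0 (S.max'_mem h) R (Finset.filter_subset _ _) ?_
        intro p hp; exact (Finset.mem_filter.mp hp).2
      have hb' : ∀ q ∈ S', ∀ R' : Finset ℕ, R' ⊆ S'.erase q → (∀ p ∈ R', p ∣ z q) →
          (∏ p ∈ R', p) ≤ q := by
        intro q hq R' hR' hdvd
        refine hb q (Finset.mem_of_mem_erase ((Finset.filter_subset _ _) hq)) R' ?_ hdvd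
        refine hR'.trans (Finset.erase_subset_erase _ ?_)
        exact (Finset.filter_subset _ _).trans (Finset.erase_subset _ _)
      have hIH : (∏ p ∈ S', p) ≤ (∏ p ∈ pick z S', p) ^ 2 := ih S' hsub hb'
      have hsplit : (∏ p ∈ S, p) = q0 * ((∏ p ∈ S', p) * (∏ p ∈ R, p)) := by
        rw [← Finset.prod_union (Finset.disjoint_filter_filter_not _ _ _).symm]
        rw [show S' ∪ R = S.erase q0 by
          rw [hS', hR]
          rw [Finset.union_comm]
          exact Finset.filter_union_filter_not_eq _ _]
        exact (Finset.mul_prod_erase S _ (S.max'_mem h)).symm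
      have hq0notin : q0 ∉ pick z S' := by
        intro hmem
        have := pick_subset z S' hmem
        exact (Finset.notMem_erase q0 S) ((Finset.filter_subset _ _) this)
      rw [Finset.prod_insert hq0notin, hsplit]
      calc q0 * ((∏ p ∈ S', p) * (∏ p ∈ R, p))
          ≤ q0 * ((∏ p ∈ pick z S', p) ^ 2 * q0) :=
            Nat.mul_le_mul_left _ (Nat.mul_le_mul hIH hRle)
        _ = (q0 * ∏ p ∈ pick z S', p) ^ 2 := by ring
    · rw [Finset.not_nonempty_iff_eq_empty.mp h]; simp

lemma prime_dvd_lcm {p : ℕ} (hp : p.Prime) (s : Finset ℕ) (f : ℕ → ℕ)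
    (h : p ∣ s.lcm f) : ∃ i ∈ s, p ∣ f i := by
  classical
  induction s using Finset.induction with
  | empty =>
    rw [Finset.lcm_empty] at h
    exact absurd (Nat.le_of_dvd one_pos h) (by have := hp.one_lt; omega)
  | insert _ _ hx ih =>
    rw [Finset.lcm_insert] at h
    have h2 : p ∣ _ * _ := h.trans (Nat.lcm_dvd_mul _ _)
    rcases (Nat.Prime.dvd_mul hp).mp h2 with h3 | h3
    · exact ⟨_, Finset.mem_insert_self _ _, h3⟩
    · obtain ⟨i, hi, hdvd⟩ := ih h3
      exact ⟨i, Finset.mem_insert_of_mem hi, hdvd⟩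

lemma rank_of_prod (a₁ a₂ : ℤ) (C : Finset ℕ) (hCp : ∀ p ∈ C, p.Prime)
    (hz : ∀ p ∈ C, 0 < rankApp a₁ a₂ p ∧
      ∀ k, ((p:ℤ) ∣ lucasSeq a₁ a₂ k ↔ rankApp a₁ a₂ p ∣ k)) :
    (∀ k, ((∏ p ∈ C, p : ℕ) : ℤ) ∣ lucasSeq a₁ a₂ k ↔ C.lcm (rankApp a₁ a₂) ∣ k) ∧
      rankApp a₁ a₂ (∏ p ∈ C, p) = C.lcm (rankApp a₁ a₂) ∧
      0 < C.lcm (rankApp a₁ a₂) := by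
  classical
  set L := C.lcm (rankApp a₁ a₂) with hL
  have hLpos : 0 < L := by
    rcases Nat.eq_zero_or_pos L with h0 | h; swap
    · exact h
    · exfalso
      rw [hL] at h0
      rcases Finset.lcm_eq_zero_iff.mp h0 with ⟨i, hi, hzero⟩
      have := (hz i hi).1
      omega
  have hiff : ∀ k, (((∏ p ∈ C, p : ℕ) : ℤ) ∣ lucasSeq a₁ a₂ k ↔ L ∣ k) := by
    intro k
    constructor
    · intro hdvd
      rw [hL]
      rw [Finset.lcm_dvd_iff]
      intro p hp
      refine ((hz p hp).2 k).mp ?_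
      refine dvd_trans ?_ hdvd
      exact_mod_cast Int.natCast_dvd_natCast.mpr (Finset.dvd_prod_of_mem _ hp)
    · intro hdvd
      have : ((∏ p ∈ C, p : ℕ) : ℤ) = ∏ p ∈ C, (p : ℤ) := by push_cast; rfl
      rw [this]
      refine Finset.prod_dvd_of_coprime ?_ ?_
      · intro i hi j hj hne
        refine Int.isCoprime_iff_gcd_eq_one.mpr ?_
        have : Nat.Coprime i j := (Nat.coprime_primes (hCp i hi) (hCp j hj)).mpr hne
        simpa [Int.gcd_natCast_natCast] using this
      · intro p hp
        refine ((hz p hp).2 k).mpr ?_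
        exact dvd_trans (Finset.dvd_lcm hp) hdvd
  refine ⟨hiff, ?_, hLpos⟩
  unfold rankApp
  apply le_antisymm
  · exact Nat.sInf_le ⟨hLpos, (hiff _).mpr dvd_rfl⟩
  · refine le_csInf ⟨L, ⟨hLpos, (hiff _).mpr dvd_rfl⟩⟩ ?_
    intro n hn
    exact Nat.le_of_dvd hn.1 ((hiff n).mp hn.2)

/-- every large squarefree `m` coprime to `a₂` has a divisor `d ≫ √m`
with `gcd(d, z(d)) = 1`. -/
theorem exists_divisor_coprime_rank (a₁ a₂ : ℤ) (ha₁ : a₁ ≠ 0) (ha₂ : a₂ ≠ 0)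
    (hcop : IsCoprime a₁ a₂) (hnd : LucasNonDeg a₁ a₂) :
    ∃ m₀ : ℕ, ∃ c > (0 : ℝ), ∀ m : ℕ, m₀ < m → Squarefree m → Int.gcd (m : ℤ) a₂ = 1 →
      ∃ d : ℕ, d ∣ m ∧ Int.gcd (d : ℤ) a₂ = 1 ∧
        Nat.gcd d (rankApp a₁ a₂ d) = 1 ∧ c * Real.sqrt m ≤ (d : ℝ) := by
  classical
  obtain ⟨hΔne, -⟩ := hnd
  set N : ℕ := (a₁^2 + 4*a₂).natAbs + 2 with hNdef
  set D : ℕ := N ^ (N + 1) with hDdef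
  have hDpos : 0 < D := Nat.pow_pos (by omega)
  have hsqD : (0:ℝ) < Real.sqrt D := Real.sqrt_pos.mpr (by exact_mod_cast hDpos)
  refine ⟨0, 1 / Real.sqrt D, by positivity, ?_⟩
  intro m hm0 hsf hgcd
  set G := m.primeFactors.filter (fun p => N < p) with hGdef
  have hod : ∀ p ∈ G, p.Prime ∧ N < p := fun p hp =>
    ⟨Nat.prime_of_mem_primeFactors (Finset.mem_filter.mp hp).1, (Finset.mem_filter.mp hp).2⟩
  have hkey : ∀ p ∈ G, 0 < rankApp a₁ a₂ p ∧
      (rankApp a₁ a₂ p ∣ p - 1 ∨ rankApp a₁ a₂ p ∣ p + 1) ∧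
      ∀ k, ((p:ℤ) ∣ lucasSeq a₁ a₂ k ↔ rankApp a₁ a₂ p ∣ k) := by
    intro p hp
    obtain ⟨hpp, hpN⟩ := hod p hp
    have hp2 : p ≠ 2 := by omega
    have hpΔ : ¬ (p:ℤ) ∣ (a₁^2 + 4*a₂) := by
      intro hdvd
      have h1 : p ∣ (a₁^2 + 4*a₂).natAbs := by
        have := Int.natAbs_dvd_natAbs.mpr hdvd
        simpa using this
      have h2 : (a₁^2 + 4*a₂).natAbs ≠ 0 := Int.natAbs_ne_zero.mpr hΔne
      have := Nat.le_of_dvd (by omega) h1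
      omega
    have hpa2 : ¬ (p:ℤ) ∣ a₂ := by
      intro hdvd
      have hp_m : (p:ℤ) ∣ (m:ℤ) :=
        Int.natCast_dvd_natCast.mpr (Nat.dvd_of_mem_primeFactors (Finset.mem_filter.mp hp).1)
      have h1 : (p:ℤ) ∣ (Int.gcd (m:ℤ) a₂ : ℤ) := Int.dvd_coe_gcd hp_m hdvd
      rw [hgcd] at h1
      have := Int.le_of_dvd one_pos h1
      have := hpp.two_le
      omega
    obtain ⟨zz, hzeq, hpos, hor, hiff⟩ := exists_rank_structure a₁ a₂ hpp hp2 hpΔ hpa2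
    rw [hzeq]
    exact ⟨hpos, hor, hiff⟩
  set C := pick (rankApp a₁ a₂) G with hCdef
  have hCG : C ⊆ G := pick_subset _ _
  set d := ∏ p ∈ C, p with hddef
  have hCp : ∀ p ∈ C, p.Prime := fun p hp => (hod p (hCG hp)).1
  have hdm : d ∣ m := by
    have h1 : d ∣ ∏ p ∈ m.primeFactors, p :=
      Finset.prod_dvd_prod_of_subset _ _ _ (hCG.trans (Finset.filter_subset _ _))
    rwa [Nat.prod_primeFactors_of_squarefree hsf] at h1
  have hdpos : 0 < d := Finset.prod_pos (fun p hp => (hCp p hp).pos)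
  have hda2 : Int.gcd (d:ℤ) a₂ = 1 := by
    have h1 : Int.gcd (d:ℤ) a₂ ∣ Int.gcd (m:ℤ) a₂ :=
      Int.gcd_dvd_gcd_of_dvd_left _ (Int.natCast_dvd_natCast.mpr hdm)
    rw [hgcd] at h1
    exact Nat.dvd_one.mp h1
  obtain ⟨hdiff, hdrank, hLpos⟩ := rank_of_prod a₁ a₂ C hCp
    (fun p hp => ⟨(hkey p (hCG hp)).1, (hkey p (hCG hp)).2.2⟩)
  set L := C.lcm (rankApp a₁ a₂) with hLdef
  have hcopr : Nat.gcd d (rankApp a₁ a₂ d) = 1 := by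
    rw [hdrank]
    by_contra hne
    have hgpos : 0 < Nat.gcd d L := Nat.gcd_pos_of_pos_left _ hdpos
    set g := Nat.gcd d L with hgdef
    have hppr : g.minFac.Prime := Nat.minFac_prime (by omega)
    set p := g.minFac with hpdef
    have hpd : p ∣ d := (Nat.minFac_dvd g).trans (Nat.gcd_dvd_left _ _)
    have hpL : p ∣ L := (Nat.minFac_dvd g).trans (Nat.gcd_dvd_right _ _)
    obtain ⟨c, hcC, hpc⟩ := (hppr.prime.dvd_finset_prod_iff _).mp hpd
    have hpceq : p = c := (Nat.prime_dvd_prime_iff_eq hppr (hCp c hcC)).mp hpc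
    have hpC : p ∈ C := hpceq ▸ hcC
    obtain ⟨q', hq'C, hpz⟩ := prime_dvd_lcm hppr C _ hpL
    have hq'G := hCG hq'C
    have hpG := hCG hpC
    have hq'N : N < q' := (hod q' hq'G).2
    have hpN : N < p := (hod p hpG).2
    have hq'p : q'.Prime := (hod q' hq'G).1
    have hzq_pos := (hkey q' hq'G).1
    have hzq_or := (hkey q' hq'G).2.1
    rcases lt_trichotomy p q' with hlt | heq | hgt
    · exact (pick_avoid _ G p hpC q' hq'C hlt) hpz
    · rcases hzq_or with hcase | hcase
      · have h1 : p ∣ q' - 1 := hpz.trans hcase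
        have := Nat.le_of_dvd (by omega) h1
        omega
      · have h1 : p ∣ q' + 1 := hpz.trans hcase
        have h2 : p ∣ q' := heq ▸ dvd_rfl
        have h3 : p ∣ 1 := by simpa using Nat.dvd_sub h1 h2
        have := Nat.le_of_dvd one_pos h3
        have := hppr.two_le
        omega
    · rcases hzq_or with hcase | hcase
      · have h1 : p ∣ q' - 1 := hpz.trans hcase
        have := Nat.le_of_dvd (by omega) h1
        omega
      · have h1 : p ∣ q' + 1 := hpz.trans hcase
        have hple : p ≤ q' + 1 := Nat.le_of_dvd (by omega) h1
        have hpeq : p = q' + 1 := by omega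
        have hq'odd : ¬ 2 ∣ q' := by
          intro h2
          have := (Nat.prime_dvd_prime_iff_eq Nat.prime_two hq'p).mp h2
          omega
        have hpodd : ¬ 2 ∣ p := by
          intro h2
          have := (Nat.prime_dvd_prime_iff_eq Nat.prime_two hppr).mp h2
          omega
        omega
  have hb : ∀ q ∈ G, ∀ R : Finset ℕ, R ⊆ G.erase q →
      (∀ p ∈ R, p ∣ rankApp a₁ a₂ q) → (∏ p ∈ R, p) ≤ q := by
    intro q hqG R hRsub hRdvd
    have hqN : N < q := (hod q hqG).2
    have hqp : q.Prime := (hod q hqG).1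
    have hRG : ∀ p ∈ R, p ∈ G := fun p hp => Finset.mem_of_mem_erase (hRsub hp)
    have hprodd : (∏ p ∈ R, p) ∣ rankApp a₁ a₂ q := by
      refine Finset.prod_primes_dvd _ ?_ hRdvd
      intro p hp
      exact (hod p (hRG p hp)).1.prime
    have hoddR : ¬ 2 ∣ (∏ p ∈ R, p) := by
      intro h2
      obtain ⟨c, hcR, h2c⟩ := (Nat.prime_two.prime.dvd_finset_prod_iff _).mp h2
      have hcp : c.Prime := (hod c (hRG c hcR)).1
      have hcN : N < c := (hod c (hRG c hcR)).2
      have := (Nat.prime_dvd_prime_iff_eq Nat.prime_two hcp).mp h2c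
      omega
    have hqodd : ¬ 2 ∣ q := by
      intro h2
      have := (Nat.prime_dvd_prime_iff_eq Nat.prime_two hqp).mp h2
      omega
    rcases (hkey q hqG).2.1 with hcase | hcase
    · obtain ⟨t, ht⟩ := hprodd.trans hcase
      have heven : 2 ∣ q - 1 := by omega
      have h2t : 2 ∣ t := by
        rcases (Nat.Prime.dvd_mul Nat.prime_two).mp (ht ▸ heven) with h' | h'
        · exact absurd h' hoddR
        · exact h'
      have h2le : (∏ p ∈ R, p) * 2 ≤ (∏ p ∈ R, p) * t := by
        refine Nat.mul_le_mul_left _ ?_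
        rcases t with _ | _ | t
        · exfalso; rw [Nat.mul_zero] at ht; omega
        · exfalso; omega
        · omega
      rw [← ht] at h2le
      omega
    · obtain ⟨t, ht⟩ := hprodd.trans hcase
      have heven : 2 ∣ q + 1 := by omega
      have h2t : 2 ∣ t := by
        rcases (Nat.Prime.dvd_mul Nat.prime_two).mp (ht ▸ heven) with h' | h'
        · exact absurd h' hoddR
        · exact h'
      have h2le : (∏ p ∈ R, p) * 2 ≤ (∏ p ∈ R, p) * t := by
        refine Nat.mul_le_mul_left _ ?_
        rcases t with _ | _ | t
        · exfalso; rw [Nat.mul_zero] at ht; omega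
        · exfalso; omega
        · omega
      rw [← ht] at h2le
      omega
  have hGle : (∏ p ∈ G, p) ≤ d ^ 2 := pick_prod _ _ hb
  set B := m.primeFactors.filter (fun p => ¬ N < p) with hBdef
  have hmsplit : m = (∏ p ∈ G, p) * (∏ p ∈ B, p) := by
    rw [← Finset.prod_union (Finset.disjoint_filter_filter_not _ _ _)]
    rw [Finset.filter_union_filter_not_eq]
    exact (Nat.prod_primeFactors_of_squarefree hsf).symm
  have hBle : (∏ p ∈ B, p) ≤ D := by
    have hcard : B.card ≤ N + 1 := by
      have hsub : B ⊆ Finset.range (N + 1) := by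
        intro p hp
        have := (Finset.mem_filter.mp hp).2
        rw [Finset.mem_range]
        omega
      calc B.card ≤ (Finset.range (N+1)).card := Finset.card_le_card hsub
        _ = N + 1 := Finset.card_range _
    calc (∏ p ∈ B, p) ≤ N ^ B.card := by
          refine Finset.prod_le_pow_card _ _ _ ?_
          intro p hp
          have := (Finset.mem_filter.mp hp).2
          omega
      _ ≤ N ^ (N + 1) := Nat.pow_le_pow_right (by omega) hcard
  have hfinal : m ≤ D * d ^ 2 := by
    rw [hmsplit]
    calc (∏ p ∈ G, p) * (∏ p ∈ B, p) ≤ d ^ 2 * D := Nat.mul_le_mul hGle hBle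
      _ = D * d ^ 2 := Nat.mul_comm _ _
  refine ⟨d, hdm, hda2, hcopr, ?_⟩
  have h1 : Real.sqrt m ≤ Real.sqrt ((D : ℝ) * (d : ℝ) ^ 2) := by
    refine Real.sqrt_le_sqrt ?_
    exact_mod_cast hfinal
  have h2 : Real.sqrt ((D:ℝ) * (d:ℝ)^2) = Real.sqrt D * d := by
    rw [Real.sqrt_mul (by positivity), Real.sqrt_sq (by positivity)]
  rw [div_mul_eq_mul_div, one_mul, div_le_iff₀ hsqD]
  calc Real.sqrt m ≤ Real.sqrt D * d := by rw [← h2]; exact h1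
    _ = d * Real.sqrt D := mul_comm _ _
end
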